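/- arXiv:2007.04405 — 8 statements merged into one kernel-verified Lean document; each statement's English description precedes it below -/
import Mathlib

section
/- A first-order structure A is polymorphism-homogeneous if and only if A^k is homomorphism-homogeneous for every natural number k. -/
/- Common framework: operations, relations, clones, preservation,
   primitive positive definability, polymorphism-homogeneity. -/

namespace PaperPH

/-- `Op A n` is the set of `n`-ary operations on `A`. -/
abbrev Op (A : Type*) (n : ℕ) := (Fin n → A) → A

/-- A family of operations on `A`, sorted by arity. -/
abbrev OpFamily (A : Type*) := ∀ n : ℕ, Set (Op A n)

/-- A family of relations on `A`, sorted by arity. -/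
abbrev RelFamily (A : Type*) := ∀ n : ℕ, Set (Set (Fin n → A))

variable {A : Type*}

/-- The `k`-ary partial operation given by the total map `h` together with domain `D`
preserves the `n`-ary relation `ρ`: for every `n × k` matrix all of whose rows lie in `D`
and all of whose columns lie in `ρ`, applying `h` to the rows yields a tuple in `ρ`. -/
def pPreserves {k n : ℕ} (D : Set (Fin k → A)) (h : Op A k) (ρ : Set (Fin n → A)) : Prop :=
  ∀ M : Fin n → Fin k → A,
    (∀ i, M i ∈ D) → (∀ j, (fun i => M i j) ∈ ρ) → (fun i => h (M i)) ∈ ρ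

/-- `h` (with domain `D`) preserves every relation of the family `R`. -/
def pPreservesAll {k : ℕ} (D : Set (Fin k → A)) (h : Op A k) (R : RelFamily A) : Prop :=
  ∀ n, ∀ ρ ∈ R n, pPreserves D h ρ

/-- The relational structure `⟨A; R⟩` is polymorphism-homogeneous: for every `k ≥ 1`,
every partial operation preserving all relations of `R` extends to a total operation
preserving all relations of `R`. -/
def RelPolyHom (R : RelFamily A) : Prop :=
  ∀ k, 1 ≤ k → ∀ (D : Set (Fin k → A)) (h : Op A k), pPreservesAll D h R →
    ∃ g : Op A k, (∀ x ∈ D, g x = h x) ∧ pPreservesAll Set.univ g R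

/-- A family of operations is a clone if it contains all projections and is closed
under composition. -/
def IsClone (C : OpFamily A) : Prop :=
  (∀ (n : ℕ) (i : Fin n), (fun x => x i) ∈ C n) ∧
  (∀ (n k : ℕ) (f : Op A n) (g : Fin n → Op A k),
    f ∈ C n → (∀ i, g i ∈ C k) → (fun x => f (fun i => g i x)) ∈ C k)

/-- The clone generated by a family `F` of operations; for an algebra with basic
operations `F` this is its clone `Clo(A)` of term operations. -/
def CloGen (F : OpFamily A) : OpFamily A :=
  fun n => { f | ∀ C : OpFamily A, IsClone C → (∀ m, F m ⊆ C m) → f ∈ C n }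

/-- The graph `f•` of an `n`-ary operation `f`: the solution set of
`f(x_1,…,x_n) = x_{n+1}`. -/
def graphRel {n : ℕ} (f : Op A n) : Set (Fin (n + 1) → A) :=
  { a | f (fun i => a i.castSucc) = a (Fin.last n) }

/-- `C•`: the family of graphs of the operations in `C`. -/
def Cdot (C : OpFamily A) : RelFamily A := fun m =>
  match m with
  | 0 => ∅
  | n + 1 => { ρ | ∃ f ∈ C n, ρ = graphRel f }

/-- `C°`: the family of solution sets `Sol(f,g) = {a | f(a) = g(a)}` of equations
between members of `C` of the same arity. -/
def Ccirc (C : OpFamily A) : RelFamily A := fun n =>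
  { ρ | ∃ f ∈ C n, ∃ g ∈ C n, ρ = { a | f a = g a } }

/-- `Pol R`: all total operations preserving every relation in `R`. -/
def PolOps (R : RelFamily A) : OpFamily A := fun k =>
  { h | pPreservesAll Set.univ h R }

/-- `Inv F`: all relations preserved by every operation in `F`. -/
def InvRels (F : OpFamily A) : RelFamily A := fun n =>
  { ρ | ∀ k, 1 ≤ k → ∀ h ∈ F k, pPreserves (Set.univ : Set (Fin k → A)) h ρ }

/-- `⟨R⟩_∄`: the relations definable by quantifier-free primitive positive formulas
over `R`, i.e. by conjunctions of atomic formulas `τ_i(x_{σ_i(1)},…,x_{σ_i(r_i)})`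
with `τ_i ∈ R`. -/
def qfDef (R : RelFamily A) : RelFamily A := fun n =>
  { ρ | ∃ (t : ℕ) (r : Fin t → ℕ) (τ : ∀ i : Fin t, Set (Fin (r i) → A))
      (σ : ∀ i : Fin t, Fin (r i) → Fin n),
      (∀ i, τ i ∈ R (r i)) ∧
      ρ = { a | ∀ i, (fun j => a (σ i j)) ∈ τ i } }

/-- `⟨R⟩_∃`: the relations definable by primitive positive formulas over `R`
(existentially quantified conjunctions of atomic formulas over `R`). -/
def ppDef (R : RelFamily A) : RelFamily A := fun n =>
  { ρ | ∃ (m t : ℕ) (r : Fin t → ℕ) (τ : ∀ i : Fin t, Set (Fin (r i) → A))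
      (σ : ∀ i : Fin t, Fin (r i) → Fin (n + m)),
      (∀ i, τ i ∈ R (r i)) ∧
      ρ = { a | ∃ b : Fin m → A, ∀ i, (fun j => Fin.append a b (σ i j)) ∈ τ i } }

/-- `B ⊆ A^k` is closed under the componentwise action of the operations in `C`,
i.e. `B` is a subalgebra (possibly empty) of the `k`-th power. -/
def ClosedUnder (C : OpFamily A) (k : ℕ) (B : Set (Fin k → A)) : Prop :=
  ∀ n, ∀ f ∈ C n, ∀ M : Fin n → Fin k → A,
    (∀ i, M i ∈ B) → (fun j => f (fun i => M i j)) ∈ B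

/-- `h` is a homomorphism from the subalgebra `B ≤ A^k` to `A` (w.r.t. the
operations in `C`): it commutes with the componentwise action on tuples from `B`. -/
def IsHomOn (C : OpFamily A) {k : ℕ} (B : Set (Fin k → A)) (h : Op A k) : Prop :=
  ∀ n, ∀ f ∈ C n, ∀ M : Fin n → Fin k → A, (∀ i, M i ∈ B) →
    h (fun j => f (fun i => M i j)) = f (fun i => h (M i))

/-- The algebra with clone of term operations `C` is polymorphism-homogeneous:
for every `k ≥ 1`, every homomorphism from a subalgebra of `A^k` to `A` extends
to a homomorphism `A^k → A`. -/
def AlgPolyHom (C : OpFamily A) : Prop :=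
  ∀ k, 1 ≤ k → ∀ B : Set (Fin k → A), ClosedUnder C k B →
    ∀ h : Op A k, IsHomOn C B h →
      ∃ g : Op A k, (∀ x ∈ B, g x = h x) ∧ IsHomOn C Set.univ g

/-- The algebra with clone of term operations `C` is homomorphism-homogeneous:
every homomorphism from a subalgebra of `A` to `A` extends to an endomorphism of `A`. -/
def AlgHomHom (C : OpFamily A) : Prop :=
  ∀ B : Set (Fin 1 → A), ClosedUnder C 1 B →
    ∀ h : Op A 1, IsHomOn C B h →
      ∃ g : Op A 1, (∀ x ∈ B, g x = h x) ∧ IsHomOn C Set.univ g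

/-- Property (SDC): the algebraic sets (solution sets of systems of equations, i.e.
the quantifier-free pp definable relations over `C°`) are exactly the relations
closed under the centralizer `C* = Pol C•`. -/
def SDC (C : OpFamily A) : Prop :=
  ∀ n, 1 ≤ n → qfDef (Ccirc C) n = InvRels (PolOps (Cdot C)) n

/-- The subalgebra of `A^k` generated by `S` (w.r.t. the operations of `C`). -/
def Gen (C : OpFamily A) (k : ℕ) (S : Set (Fin k → A)) : Set (Fin k → A) :=
  ⋂₀ { B | ClosedUnder C k B ∧ S ⊆ B }

/-- The algebra with clone of term operations `C` is injective in `SP_fin(A)`,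
the class of subalgebras of finite direct powers of `A`: every homomorphism from
a subalgebra `B ≤ B' ≤ A^m` to `A` extends to a homomorphism `B' → A`. -/
def InjSPfin (C : OpFamily A) : Prop :=
  ∀ m, 1 ≤ m → ∀ B B' : Set (Fin m → A), ClosedUnder C m B → ClosedUnder C m B' → B ⊆ B' →
    ∀ h : Op A m, IsHomOn C B h →
      ∃ g : Op A m, (∀ x ∈ B, g x = h x) ∧ IsHomOn C B' g

end PaperPH

open PaperPH

namespace PaperPH

variable {A : Type*}

/-- `h` (relevant on `B ⊆ A^k`) is a homomorphism of first-order structures from the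
substructure `B` of `⟨A;F;R⟩^k` to `⟨A;F;R⟩`: it commutes with the operations of `F`
and preserves the relations of `R`. -/
def StrHomOn (F : OpFamily A) (R : RelFamily A) {k : ℕ}
    (B : Set (Fin k → A)) (h : Op A k) : Prop :=
  IsHomOn F B h ∧ ∀ n, ∀ ρ ∈ R n, pPreserves B h ρ

/-- The first-order structure `⟨A;F;R⟩` is `k`-polymorphism-homogeneous: every
homomorphism from a finitely generated substructure of the `k`-th power to the
structure extends to a homomorphism defined on the whole `k`-th power. -/
def StructPolyHomAt (F : OpFamily A) (R : RelFamily A) (k : ℕ) : Prop :=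
  ∀ S : Set (Fin k → A), S.Finite →
    ∀ h : Op A k, StrHomOn F R (Gen F k S) h →
      ∃ g : Op A k, (∀ x ∈ Gen F k S, g x = h x) ∧ StrHomOn F R Set.univ g

/-- The first-order structure `⟨A;F;R⟩` is polymorphism-homogeneous. -/
def StructPolyHom (F : OpFamily A) (R : RelFamily A) : Prop :=
  ∀ k, 1 ≤ k → StructPolyHomAt F R k

/-- The operations of the `k`-th direct power of `⟨A;F;R⟩`, acting componentwise. -/
def powerOps (F : OpFamily A) (k : ℕ) : OpFamily (Fin k → A) := fun n =>
  { fc | ∃ f ∈ F n, fc = fun (M : Fin n → Fin k → A) (j : Fin k) => f (fun i => M i j) }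

/-- The relations of the `k`-th direct power of `⟨A;F;R⟩`, defined componentwise. -/
def powerRels (R : RelFamily A) (k : ℕ) : RelFamily (Fin k → A) := fun n =>
  { ρ' | ∃ ρ ∈ R n, ρ' = { M : Fin n → Fin k → A | ∀ j, (fun i => M i j) ∈ ρ } }

/-- A first-order structure is homomorphism-homogeneous if it is
`1`-polymorphism-homogeneous. -/
def StructHomHom (F : OpFamily A) (R : RelFamily A) : Prop :=
  StructPolyHomAt F R 1

end PaperPH

/- A homomorphism from a substructure of `(A^k)^1` to `A^k` is the same thing as a `k`-tuple of
homomorphisms from the corresponding substructure of `A^k` to `A`, its coordinates; and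
`x ↦ const x` identifies the substructure of `A^k` generated by `S` with that of `(A^k)^1`
generated by the image of `S`. So extending a homomorphism into `A^k` amounts to extending
each coordinate, which is `k`-polymorphism-homogeneity; conversely a homomorphism into `A`
extends once its diagonal copy into `A^k` does. -/

namespace PaperPH

open Function

variable {A : Type*}

section Gen

variable {C : OpFamily A} {k : ℕ}

lemma subset_gen (S : Set (Fin k → A)) : S ⊆ Gen C k S :=
  fun _ hx _ hB => hB.2 hx

lemma closedUnder_gen (S : Set (Fin k → A)) : ClosedUnder C k (Gen C k S) :=
  fun n f hf M hM B hB => hB.1 n f hf M fun i => hM i B hB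

lemma gen_subset_of_closedUnder {S B : Set (Fin k → A)} (hB : ClosedUnder C k B) (hS : S ⊆ B) :
    Gen C k S ⊆ B :=
  Set.sInter_subset_of_mem ⟨hB, hS⟩

end Gen

lemma exists_eq_const_of_unique {ι α X : Type*} [Unique α] (N : ι → α → X) :
    ∃ M : ι → X, N = fun i => const α (M i) :=
  ⟨fun i => N i default, funext fun i => eq_const_of_unique (N i)⟩

variable {F : OpFamily A} {R : RelFamily A} {k : ℕ}

lemma preimage_const_gen_powerOps (S' : Set (Fin 1 → Fin k → A)) :
    const (Fin 1) ⁻¹' Gen (powerOps F k) 1 S' = Gen F k (const (Fin 1) ⁻¹' S') := by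
  apply Set.Subset.antisymm
  · have hclosed :
        ClosedUnder (powerOps F k) 1 {M | M default ∈ Gen F k (const (Fin 1) ⁻¹' S')} := by
      rintro n _ ⟨f, hf, rfl⟩ N hN
      exact closedUnder_gen _ n f hf (fun i => N i default) hN
    have hS' : S' ⊆ {M | M default ∈ Gen F k (const (Fin 1) ⁻¹' S')} := fun M hM =>
      subset_gen _ (show const (Fin 1) (M default) ∈ S' from eq_const_of_unique M ▸ hM)
    exact fun x hx => gen_subset_of_closedUnder hclosed hS' hx
  · refine gen_subset_of_closedUnder ?_ fun x hx => subset_gen S' hx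
    intro n f hf M hM
    exact closedUnder_gen (C := powerOps F k) S' n _ ⟨f, hf, rfl⟩ (fun i => const (Fin 1) (M i)) hM

lemma isHomOn_powerOps_iff (B' : Set (Fin 1 → Fin k → A)) (H : Op (Fin k → A) 1) :
    IsHomOn (powerOps F k) B' H ↔
      ∀ l, IsHomOn F (const (Fin 1) ⁻¹' B') fun x => H (const (Fin 1) x) l := by
  constructor
  · intro hH l n f hf M hM
    exact congrFun (hH n _ ⟨f, hf, rfl⟩ (fun i => const (Fin 1) (M i)) hM) l
  · rintro hH n _ ⟨f, hf, rfl⟩ N hN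
    obtain ⟨M, rfl⟩ := exists_eq_const_of_unique N
    exact funext fun l => hH l n f hf M hN

lemma pPreserves_powerRels_iff {n : ℕ} (B' : Set (Fin 1 → Fin k → A)) (H : Op (Fin k → A) 1)
    (ρ : Set (Fin n → A)) :
    pPreserves B' H {M : Fin n → Fin k → A | ∀ j, (fun i => M i j) ∈ ρ} ↔
      ∀ l, pPreserves (const (Fin 1) ⁻¹' B') (fun x => H (const (Fin 1) x) l) ρ := by
  constructor
  · intro hH l M hM hcols
    exact hH (fun i => const (Fin 1) (M i)) hM (fun _ => hcols) l
  · intro hH N hN hcols l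
    obtain ⟨M, rfl⟩ := exists_eq_const_of_unique N
    exact hH l M hN (hcols default)

theorem strHomOn_power_iff (B' : Set (Fin 1 → Fin k → A)) (H : Op (Fin k → A) 1) :
    StrHomOn (powerOps F k) (powerRels R k) B' H ↔
      ∀ l, StrHomOn F R (const (Fin 1) ⁻¹' B') fun x => H (const (Fin 1) x) l := by
  constructor
  · rintro ⟨hops, hrels⟩ l
    exact ⟨(isHomOn_powerOps_iff B' H).1 hops l,
      fun n ρ hρ => (pPreserves_powerRels_iff B' H ρ).1 (hrels n _ ⟨ρ, hρ, rfl⟩) l⟩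
  · intro hH
    refine ⟨(isHomOn_powerOps_iff B' H).2 fun l => (hH l).1, ?_⟩
    rintro n _ ⟨ρ, hρ, rfl⟩
    exact (pPreserves_powerRels_iff B' H ρ).2 fun l => (hH l).2 n ρ hρ

end PaperPH

/-- A first-order structure `A = ⟨A;F;R⟩` is polymorphism-homogeneous
iff `A^k` is homomorphism-homogeneous for every natural number `k`. -/
theorem structPolyHom_iff_powers_homHom (A : Type*) (F : OpFamily A) (R : RelFamily A) :
    StructPolyHom F R ↔
      ∀ k, 1 ≤ k → StructHomHom (powerOps F k) (powerRels R k) := by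
  constructor
  · intro hPH k hk S' hS' H hH
    rw [strHomOn_power_iff, preimage_const_gen_powerOps] at hH
    choose g hg hgHom using fun l => hPH k hk _ (hS'.preimage Function.const_injective.injOn) _ (hH l)
    refine ⟨fun M l => g l (M default), fun M hM => funext fun l => ?_, ?_⟩
    · rw [eq_const_of_unique M, ← Set.mem_preimage, preimage_const_gen_powerOps] at hM
      exact (hg l _ hM).trans (congrFun (congrArg H (eq_const_of_unique M).symm) l)
    · exact (strHomOn_power_iff _ _).2 hgHom
  · intro hHH k hk S hS h hh
    have hdiag : StrHomOn (powerOps F k) (powerRels R k)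
        (Gen (powerOps F k) 1 (Function.const (Fin 1) '' S)) fun M _ => h (M default) := by
      rw [strHomOn_power_iff, preimage_const_gen_powerOps, Set.preimage_image_eq _ Function.const_injective]
      exact fun _ => hh
    obtain ⟨g, hg, hgHom⟩ := hHH k hk _ (hS.image _) _ hdiag
    refine ⟨fun x => g (Function.const (Fin 1) x) ⟨0, hk⟩, fun x hx => congrFun (hg _ ?_) _,
      (strHomOn_power_iff _ _).1 hgHom _⟩
    rwa [← Set.mem_preimage, preimage_const_gen_powerOps, Set.preimage_image_eq _ Function.const_injective]
end

section
/- Let A be a finite algebra, C = Clo(A), and let h be a k-ary partial operation on A whose domain dom h is a subalgebra of A^k. Then the following three conditions are equivalent: (a) h preserves every relation in C•; (b) h preserves every relation in C°; (c) h is a homomorphism from the subalgebra dom h to A. -/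
open PaperPH

/-- Let `A` be a finite algebra with clone of term operations `C`, and
let `h` be a `k`-ary partial operation on `A` whose domain `D` is a subalgebra of `A^k`.
Then the following are equivalent: (a) `h` preserves every relation in `C•`;
(b) `h` preserves every relation in `C°`; (c) `h` is a homomorphism from `D` to `A`. -/
theorem pPreserves_Cdot_iff_Ccirc_iff_hom (A : Type*) [Fintype A]
    (C : OpFamily A) (hC : IsClone C) (k : ℕ) (hk : 1 ≤ k)
    (D : Set (Fin k → A)) (hD : ClosedUnder C k D) (h : Op A k) :
    (pPreservesAll D h (Cdot C) ↔ pPreservesAll D h (Ccirc C)) ∧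
    (pPreservesAll D h (Ccirc C) ↔ IsHomOn C D h) := by
  -- (b) ⟹ (a): each graph `f•` equals `Sol(f∘π, π_last)`.
  have hca : pPreservesAll D h (Ccirc C) → pPreservesAll D h (Cdot C) := by
    intro hb n ρ hρ
    cases n with
    | zero => exact hρ.elim
    | succ n =>
      obtain ⟨f, hf, rfl⟩ := hρ
      exact hb (n+1) _ ⟨fun x => f (fun i => x i.castSucc),
        hC.2 n (n+1) f (fun i x => x i.castSucc) hf (fun i => hC.1 (n+1) i.castSucc),
        fun x => x (Fin.last n), hC.1 (n+1) (Fin.last n), rfl⟩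
  -- (a) ⟹ (c)
  have hah : pPreservesAll D h (Cdot C) → IsHomOn C D h := by
    intro ha n f hf M hM
    set M' : Fin (n+1) → Fin k → A := Fin.snoc M (fun j => f fun i => M i j) with hM'
    have e1 : ∀ i : Fin n, M' i.castSucc = M i := fun i => Fin.snoc_castSucc _ _ _
    have e2 : M' (Fin.last n) = fun j => f fun i => M i j := Fin.snoc_last _ _
    have key : (fun i => h (M' i)) ∈ graphRel f := by
      refine ha (n+1) (graphRel f) ⟨f, hf, rfl⟩ M' ?_ ?_
      · intro i
        refine Fin.lastCases ?_ ?_ i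
        · rw [e2]; exact hD n f hf M hM
        · intro i; rw [e1]; exact hM i
      · intro j
        show f (fun i => M' i.castSucc j) = M' (Fin.last n) j
        have : (fun i : Fin n => M' i.castSucc j) = fun i => M i j := by
          funext i; rw [e1]
        rw [this, e2]
    have key2 : f (fun i => h (M' i.castSucc)) = h (M' (Fin.last n)) := key
    rw [e2] at key2
    rw [← key2]
    congr 1
    funext i
    rw [e1]
  -- (c) ⟹ (b)
  have hhc : IsHomOn C D h → pPreservesAll D h (Ccirc C) := by
    intro hhom n ρ hρ
    obtain ⟨f, hf, g, hg, rfl⟩ := hρ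
    intro M hrows hcols
    show f (fun i => h (M i)) = g (fun i => h (M i))
    have hcol : (fun j => f (fun i => M i j)) = (fun j => g (fun i => M i j)) :=
      funext fun j => hcols j
    calc f (fun i => h (M i)) = h (fun j => f (fun i => M i j)) :=
          (hhom n f hf M hrows).symm
      _ = h (fun j => g (fun i => M i j)) := by rw [hcol]
      _ = g (fun i => h (M i)) := hhom n g hg M hrows
  exact ⟨⟨fun ha => hhc (hah ha), hca⟩, ⟨fun hb => hah (hca hb), hhc⟩⟩
end

section
/- Let C be a clone on a finite set A, and let h be a k-ary partial operation on A that preserves every relation in C°. Then h can be extended to a partial operation h' on A such that h' preserves every relation in C° and the domain of h' is the subalgebra of A^k generated by dom h (the closure of dom h under the componentwise action of the operations in C). -/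
open PaperPH

namespace ExtAux

variable {A : Type*} {C : OpFamily A} {k : ℕ} {D : Set (Fin k → A)}

/-- Representation data: `b` is obtained by applying a term `t ∈ C` componentwise
to rows from `D`. -/
def RepData (C : OpFamily A) (D : Set (Fin k → A)) (b : Fin k → A) : Type _ :=
  Σ' (n : ℕ) (t : Op A n) (M : Fin n → Fin k → A),
    t ∈ C n ∧ (∀ i, M i ∈ D) ∧ ∀ j, b j = t (fun i => M i j)

/-- Any two representations of the same tuple yield the same value under `h`. -/
lemma coherent (hC : IsClone C) (h : Op A k) (hh : pPreservesAll D h (Ccirc C))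
    {b : Fin k → A} {n m : ℕ} {t : Op A n} {s : Op A m}
    (ht : t ∈ C n) (hs : s ∈ C m)
    {M : Fin n → Fin k → A} {N : Fin m → Fin k → A}
    (hM : ∀ i, M i ∈ D) (hN : ∀ i, N i ∈ D)
    (hbM : ∀ j, b j = t (fun i => M i j)) (hbN : ∀ j, b j = s (fun i => N i j)) :
    t (fun i => h (M i)) = s (fun i => h (N i)) := by
  set t' : Op A (n + m) := fun a => t (fun i => a (Fin.castAdd m i)) with ht'
  set s' : Op A (n + m) := fun a => s (fun i => a (Fin.natAdd n i)) with hs'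
  have ht'C : t' ∈ C (n + m) :=
    hC.2 n (n + m) t (fun i x => x (Fin.castAdd m i)) ht (fun i => hC.1 _ _)
  have hs'C : s' ∈ C (n + m) :=
    hC.2 m (n + m) s (fun i x => x (Fin.natAdd n i)) hs (fun i => hC.1 _ _)
  set P : Fin (n + m) → Fin k → A := fun q => Fin.addCases M N q with hP
  have hrows : ∀ q, P q ∈ D := by
    intro q
    refine Fin.addCases (fun i => ?_) (fun i => ?_) q <;>
      simp [hP, Fin.addCases_left, Fin.addCases_right, hM, hN]
  have hcols : ∀ j, (fun q => P q j) ∈ {a : Fin (n+m) → A | t' a = s' a} := by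
    intro j
    simp only [Set.mem_setOf_eq, ht', hs', hP, Fin.addCases_left, Fin.addCases_right]
    rw [← hbM j, ← hbN j]
  have := hh (n + m) {a | t' a = s' a} ⟨t', ht'C, s', hs'C, rfl⟩ P hrows hcols
  simpa only [Set.mem_setOf_eq, ht', hs', hP, Fin.addCases_left, Fin.addCases_right]
    using this

open Classical in
noncomputable def extFun (C : OpFamily A) (D : Set (Fin k → A)) (h : Op A k) :
    Op A k := fun b =>
  if hb : Nonempty (RepData C D b) then
    let d := Classical.choice hb
    d.2.1 (fun i => h (d.2.2.1 i))
  else h b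

lemma extFun_spec (hC : IsClone C) (h : Op A k) (hh : pPreservesAll D h (Ccirc C))
    {b : Fin k → A} {n : ℕ} {t : Op A n} {M : Fin n → Fin k → A}
    (ht : t ∈ C n) (hM : ∀ i, M i ∈ D) (hbM : ∀ j, b j = t (fun i => M i j)) :
    extFun C D h b = t (fun i => h (M i)) := by
  have hb : Nonempty (RepData C D b) := ⟨⟨n, t, M, ht, hM, hbM⟩⟩
  rw [extFun, dif_pos hb]
  obtain ⟨n', t', M', ht', hM', hbM'⟩ := Classical.choice hb
  exact coherent hC h hh ht' ht hM' hM hbM' hbM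

lemma repSet_closed (hC : IsClone C) :
    ClosedUnder C k {b | Nonempty (RepData C D b)} := by
  intro n f hf M hM
  set d : ∀ i : Fin n, RepData C D (M i) := fun i => Classical.choice (hM i) with hd
  set N := Fintype.card (Σ i : Fin n, Fin (d i).1) with hN
  set e : (Σ i : Fin n, Fin (d i).1) ≃ Fin N := Fintype.equivFin _ with he
  set row : (Σ i : Fin n, Fin (d i).1) → (Fin k → A) :=
    fun p => (d p.1).2.2.1 p.2 with hrow
  refine ⟨⟨N, fun x => f (fun i => (d i).2.1 (fun l => x (e ⟨i, l⟩))),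
      fun q => row (e.symm q), ?_, ?_, ?_⟩⟩
  · exact hC.2 n N f _ hf (fun i =>
      hC.2 _ N _ (fun l x => x (e ⟨i, l⟩)) (d i).2.2.2.1 (fun l => hC.1 N (e ⟨i, l⟩)))
  · intro q; exact (d (e.symm q).1).2.2.2.2.1 _
  · intro j
    simp only [Equiv.symm_apply_apply]
    congr 1
    funext i
    exact (d i).2.2.2.2.2 j

end ExtAux

open PaperPH
/-- Let `C` be a clone on a finite set `A` and let `h` be a `k`-ary
partial operation (with domain `D`) preserving every relation in `C°`. Then `h`
extends to a partial operation `h'` whose domain is the subalgebra of `A^k` generated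
by `D` and which still preserves every relation in `C°`. -/
theorem extend_pPreserves_Ccirc (A : Type*) [Fintype A]
    (C : OpFamily A) (hC : IsClone C) (k : ℕ) (hk : 1 ≤ k)
    (D : Set (Fin k → A)) (h : Op A k) (hh : pPreservesAll D h (Ccirc C)) :
    ∃ h' : Op A k, (∀ x ∈ D, h' x = h x) ∧ pPreservesAll (Gen C k D) h' (Ccirc C) := by

  classical
  refine ⟨ExtAux.extFun C D h, ?_, ?_⟩
  · intro x hx
    have := ExtAux.extFun_spec hC h hh (hC.1 1 0) (M := fun _ => x)
      (fun _ => hx) (fun j => rfl)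
    simpa using this
  · intro n ρ hρ M hM hcols
    obtain ⟨f, hf, g, hg, rfl⟩ := hρ
    have hGen : Gen C k D ⊆ {b | Nonempty (ExtAux.RepData C D b)} :=
      Set.sInter_subset_of_mem ⟨ExtAux.repSet_closed hC,
        fun b hb => ⟨⟨1, fun a => a 0, fun _ => b, hC.1 1 0, fun _ => hb, fun j => rfl⟩⟩⟩
    set d : ∀ i : Fin n, ExtAux.RepData C D (M i) :=
      fun i => Classical.choice (hGen (hM i)) with hd
    set N := Fintype.card (Σ i : Fin n, Fin (d i).1) with hN
    set e : (Σ i : Fin n, Fin (d i).1) ≃ Fin N := Fintype.equivFin _ with he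
    set row : (Σ i : Fin n, Fin (d i).1) → (Fin k → A) :=
      fun p => (d p.1).2.2.1 p.2 with hrow
    set F : Op A N := fun x => f (fun i => (d i).2.1 (fun l => x (e ⟨i, l⟩))) with hF
    set G : Op A N := fun x => g (fun i => (d i).2.1 (fun l => x (e ⟨i, l⟩))) with hGdef
    have hFC : F ∈ C N := hC.2 n N f _ hf (fun i =>
      hC.2 _ N _ (fun l x => x (e ⟨i, l⟩)) (d i).2.2.2.1 (fun l => hC.1 N (e ⟨i, l⟩)))
    have hGC : G ∈ C N := hC.2 n N g _ hg (fun i =>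
      hC.2 _ N _ (fun l x => x (e ⟨i, l⟩)) (d i).2.2.2.1 (fun l => hC.1 N (e ⟨i, l⟩)))
    set P : Fin N → Fin k → A := fun q => row (e.symm q) with hP
    have hrows : ∀ q, P q ∈ D := fun q => (d (e.symm q).1).2.2.2.2.1 _
    have hcols' : ∀ j, (fun q => P q j) ∈ {a : Fin N → A | F a = G a} := by
      intro j
      have key : (fun i => (d i).2.1 (fun l => P (e ⟨i, l⟩) j)) = fun i => M i j := by
        funext i
        simp only [hP]
        simp only [Equiv.symm_apply_apply]
        simp only [hrow]
        exact ((d i).2.2.2.2.2 j).symm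
      simp only [Set.mem_setOf_eq, hF, hGdef, key]
      exact hcols j
    have main := hh N {a | F a = G a} ⟨F, hFC, G, hGC, rfl⟩ P hrows hcols'
    simp only [Set.mem_setOf_eq, hF, hGdef] at main ⊢
    have key3 : (fun i => (d i).2.1 (fun l => h (P (e ⟨i, l⟩)))) =
        fun i => ExtAux.extFun C D h (M i) := by
      funext i
      simp only [hP]
      simp only [Equiv.symm_apply_apply]
      simp only [hrow]
      exact (ExtAux.extFun_spec hC h hh (d i).2.2.2.1 (d i).2.2.2.2.1 (d i).2.2.2.2.2).symm
    rw [key3] at main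
    exact main
end

section
/- Let A be a finite algebra and C = Clo(A). Then A is polymorphism-homogeneous if and only if the relational structure ⟨A;C°⟩ is polymorphism-homogeneous. -/
open PaperPH

section Aux

variable {A : Type*}

/-- An operation preserving all of `C°` on the full domain is a homomorphism
`A^k → A` (graph trick). -/
lemma homOn_univ_of_preserves {C : OpFamily A} (hC : IsClone C) {k : ℕ}
    {g : Op A k} (hg : pPreservesAll Set.univ g (Ccirc C)) : IsHomOn C Set.univ g := by
  intro n f hf M _
  set F : Op A (n + 1) := fun a => f (fun i => a i.castSucc) with hF
  have hFC : F ∈ C (n + 1) :=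
    hC.2 n (n + 1) f (fun i x => x i.castSucc) hf (fun i => hC.1 (n + 1) i.castSucc)
  have hGC : (fun a : Fin (n + 1) → A => a (Fin.last n)) ∈ C (n + 1) :=
    hC.1 (n + 1) (Fin.last n)
  have hρ : ({a | F a = a (Fin.last n)} : Set (Fin (n + 1) → A)) ∈ Ccirc C (n + 1) :=
    ⟨F, hFC, _, hGC, rfl⟩
  set M' : Fin (n + 1) → Fin k → A := Fin.snoc M (fun j => f (fun i => M i j)) with hM'
  have h1 : ∀ i : Fin n, M' i.castSucc = M i := fun i => Fin.snoc_castSucc _ _ _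
  have h2 : M' (Fin.last n) = fun j => f (fun i => M i j) := Fin.snoc_last _ _
  have hcol : ∀ j, (fun i => M' i j) ∈ ({a | F a = a (Fin.last n)} : Set (Fin (n + 1) → A)) := by
    intro j
    show f (fun i : Fin n => M' i.castSucc j) = M' (Fin.last n) j
    have hx : (fun i : Fin n => M' i.castSucc j) = fun i => M i j := by
      funext i; rw [h1]
    rw [hx, h2]
  have := hg (n + 1) _ hρ M' (fun _ => Set.mem_univ _) hcol
  have hy : (fun i : Fin n => g (M' i.castSucc)) = fun i => g (M i) := by
    funext i; rw [h1]
  simpa [hF, hy, h2] using this.symm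

/-- A homomorphism on `B` preserves all of `C°` as a partial operation with domain `B`. -/
lemma preserves_of_homOn {C : OpFamily A} {k : ℕ} {B : Set (Fin k → A)} {h : Op A k}
    (hh : IsHomOn C B h) : pPreservesAll B h (Ccirc C) := by
  rintro n ρ ⟨f, hf, g', hg', rfl⟩ M hrows hcols
  show f (fun i => h (M i)) = g' (fun i => h (M i))
  have h1 := hh n f hf M hrows
  have h2 := hh n g' hg' M hrows
  rw [← h1, ← h2]
  exact congrArg h (funext hcols)

end Aux

/-- Let `A` be a finite algebra with clone of term operations `C`.
Then `A` is polymorphism-homogeneous iff the relational structure `⟨A;C°⟩` is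
polymorphism-homogeneous. -/
theorem algPolyHom_iff_relPolyHom_Ccirc (A : Type*) [Fintype A]
    (C : OpFamily A) (hC : IsClone C) :
    AlgPolyHom C ↔ RelPolyHom (Ccirc C) := by
  constructor
  · -- AlgPolyHom → RelPolyHom
    intro hA k hk D h hpp
    classical
    obtain ⟨m, e, he⟩ := (Set.toFinite D).fin_embedding
    set W : Fin k → Fin m → A := fun j i => e i j with hW
    set B : Set (Fin k → A) := {b | ∃ f ∈ C m, b = fun j => f (W j)} with hB
    -- well-definedness
    have wd : ∀ f ∈ C m, ∀ g ∈ C m, (∀ j, f (W j) = g (W j)) →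
        f (fun i => h (e i)) = g (fun i => h (e i)) := by
      intro f hf g hg hfg
      exact hpp m {a | f a = g a} ⟨f, hf, g, hg, rfl⟩ (fun i => e i)
        (fun i => he ▸ Set.mem_range_self i) hfg
    set h' : Op A k := fun b => if hb : b ∈ B then hb.choose (fun i => h (e i)) else h b
      with hh'
    have spec : ∀ b, ∀ hb : b ∈ B, ∀ f ∈ C m, b = (fun j => f (W j)) →
        h' b = f (fun i => h (e i)) := by
      intro b hb f hf hbf
      have hc := hb.choose_spec
      have : h' b = hb.choose (fun i => h (e i)) := dif_pos hb
      rw [this]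
      exact wd _ hc.1 f hf (fun j => by
        rw [← congrFun hc.2 j, ← congrFun hbf j])
    have hDB : ∀ x ∈ D, x ∈ B := by
      intro x hx
      rw [← he] at hx
      obtain ⟨i0, rfl⟩ := hx
      exact ⟨fun v => v i0, hC.1 m i0, rfl⟩
    have hBcl : ClosedUnder C k B := by
      intro n f hf M hM
      choose t ht hMt using hM
      refine ⟨fun x => f (fun i => t i x), hC.2 n m f t hf ht, ?_⟩
      funext j
      show f (fun i => M i j) = f (fun i => t i (W j))
      congr 1
      funext i
      exact congrFun (hMt i) j
    have hhom : IsHomOn C B h' := by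
      intro n f hf M hM
      choose t ht hMt using hM
      have hFC : (fun x => f (fun i => t i x)) ∈ C m := hC.2 n m f t hf ht
      have hrep : (fun j => f (fun i => M i j)) =
          fun j => (fun x => f (fun i => t i x)) (W j) := by
        funext j
        show f (fun i => M i j) = f (fun i => t i (W j))
        congr 1
        funext i
        exact congrFun (hMt i) j
      have hl : h' (fun j => f (fun i => M i j)) = f (fun i => t i (fun i' => h (e i'))) :=
        spec _ ⟨_, hFC, hrep⟩ _ hFC hrep
      have hr : ∀ i, h' (M i) = t i (fun i' => h (e i')) := fun i =>
        spec _ ⟨t i, ht i, hMt i⟩ _ (ht i) (hMt i)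
      rw [hl]
      congr 1
      funext i
      rw [hr i]
    have hext : ∀ x ∈ D, h' x = h x := by
      intro x hx
      rw [← he] at hx
      obtain ⟨i0, rfl⟩ := hx
      exact spec _ (hDB _ (he ▸ Set.mem_range_self i0)) (fun v => v i0) (hC.1 m i0) rfl
    obtain ⟨g, hgB, hgu⟩ := hA k hk B hBcl h' hhom
    exact ⟨g, fun x hx => (hgB x (hDB x hx)).trans (hext x hx), preserves_of_homOn hgu⟩
  · -- RelPolyHom → AlgPolyHom
    intro hrel k hk B hBcl h hh
    obtain ⟨g, hgB, hgu⟩ := hrel k hk B h (preserves_of_homOn hh)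
    exact ⟨g, hgB, homOn_univ_of_preserves hC hgu⟩
end

section
/- Let A be a finite algebra and C = Clo(A). Then the relational structure ⟨A;C•⟩ is polymorphism-homogeneous if and only if ⟨A;C°⟩ is polymorphism-homogeneous and ⟨C•⟩_∄ = ⟨C°⟩_∄. -/
/-! Total polymorphisms of `C•` and of `C°` coincide: `f(x) = g(x)` says that some `y` is both
`f(x)` and `g(x)`, while `f(x) = y` is itself an equation between term operations. For
partial operations, preserving `C°` implies preserving `C•`, and the converse holds as soon as
`C° ⊆ ⟨C•⟩_∄`; this gives "⇐" and the first half of "⇒".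

For the second half, let `⟨A; R⟩` be polymorphism-homogeneous with `A` finite and equality among
the relations of `R`, and let `ρ ≠ ∅` be invariant under `Pol R`. Take `a` in the intersection of
all relations of `⟨R⟩_∄` containing `ρ`, and a matrix whose columns enumerate `ρ`. Sending its
`i`-th row to `a i` is a well-defined partial polymorphism of `R`, because every atomic
constraint satisfied by all columns is satisfied by `a`. A total extension maps the columns,
which lie in `ρ`, to `a`, so `a ∈ ρ` and `ρ` is quantifier-free definable. Applied to
`R = C•` this covers every nonempty `Sol(f, g)`; an empty one is the pullback of
`f• ∩ g•` along a constant map. -/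

namespace PaperPH

variable {A : Type*}

section qfDef

variable {R : RelFamily A}

lemma mem_qfDef_of_mem {n : ℕ} {ρ : Set (Fin n → A)} (hρ : ρ ∈ R n) : ρ ∈ qfDef R n :=
  ⟨1, fun _ => n, fun _ => ρ, fun _ => id, fun _ => hρ, by ext; simp⟩

lemma qfDef_mono {S : RelFamily A} (hRS : ∀ m, R m ⊆ S m) (n : ℕ) :
    qfDef R n ⊆ qfDef S n := by
  rintro _ ⟨t, r, τ, σ, hτ, rfl⟩
  exact ⟨t, r, τ, σ, fun i => hRS _ (hτ i), rfl⟩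

lemma qfDef_qfDef_subset (n : ℕ) : qfDef (qfDef R) n ⊆ qfDef R n := by
  rintro _ ⟨t, r, τ, σ, hτ, rfl⟩
  choose t' r' τ' σ' hτ' hτ_eq using hτ
  obtain ⟨N, e, -, he⟩ := (Set.toFinite (Set.univ : Set ((i : Fin t) × Fin (t' i)))).fin_param
  refine ⟨N, fun j => r' (e j).1 (e j).2, fun j => τ' (e j).1 (e j).2,
    fun j q => σ (e j).1 (σ' (e j).1 (e j).2 q), fun j => hτ' _ _, ?_⟩
  ext a
  simp only [Set.mem_ofPred_eq, hτ_eq]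
  constructor
  · exact fun ha j => ha (e j).1 (e j).2
  · intro ha i i'
    have hall : ∀ p ∈ Set.range e, (fun q => a (σ p.1 (σ' p.1 p.2 q))) ∈ τ' p.1 p.2 := by
      rintro _ ⟨j, rfl⟩
      exact ha j
    exact hall ⟨i, i'⟩ (he ▸ Set.mem_univ _)

lemma comap_mem_qfDef {m n : ℕ} {ρ : Set (Fin m → A)} (hρ : ρ ∈ qfDef R m) (σ : Fin m → Fin n) :
    {a : Fin n → A | (fun j => a (σ j)) ∈ ρ} ∈ qfDef R n := by
  obtain ⟨t, r, τ, σ', hτ, rfl⟩ := hρ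
  exact ⟨t, r, τ, fun i => σ ∘ σ' i, hτ, rfl⟩

lemma inter_mem_qfDef {n : ℕ} {ρ₁ ρ₂ : Set (Fin n → A)} (h₁ : ρ₁ ∈ qfDef R n)
    (h₂ : ρ₂ ∈ qfDef R n) : ρ₁ ∩ ρ₂ ∈ qfDef R n := by
  refine qfDef_qfDef_subset n ⟨2, fun _ => n, ![ρ₁, ρ₂], fun _ => id, ?_, ?_⟩
  · exact Fin.forall_fin_two.2 ⟨h₁, h₂⟩
  · ext a
    simp [Fin.forall_fin_two]

lemma sInter_mem_qfDef [Finite A] {n : ℕ} {F : Set (Set (Fin n → A))}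
    (hF : F ⊆ qfDef R n) : ⋂₀ F ∈ qfDef R n := by
  obtain ⟨t, e, -, he⟩ := (Set.toFinite F).fin_param
  refine qfDef_qfDef_subset n ⟨t, fun _ => n, e, fun _ => id, fun i => hF (he.le ⟨i, rfl⟩), ?_⟩
  ext a
  simp only [Set.mem_sInter, ← he, Set.forall_mem_range, Set.mem_ofPred_eq, id]

end qfDef

section Preservation

variable {k : ℕ} {D : Set (Fin k → A)} {h : Op A k} {R S : RelFamily A}

lemma pPreserves_of_arity_zero (hk : 1 ≤ k) (ρ : Set (Fin 0 → A)) : pPreserves D h ρ :=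
  fun M _ hcol => Subsingleton.elim (α := Fin 0 → A) (fun i => M i ⟨0, hk⟩) (fun i => h (M i)) ▸
    hcol ⟨0, hk⟩

lemma pPreservesAll.mono (hRS : ∀ m, R m ⊆ S m) (hh : pPreservesAll D h S) :
    pPreservesAll D h R :=
  fun n ρ hρ => hh n ρ (hRS n hρ)

lemma pPreservesAll.to_qfDef (hh : pPreservesAll D h R) : pPreservesAll D h (qfDef R) := by
  rintro n _ ⟨t, r, τ, σ, hτ, rfl⟩ M hM hcol i
  exact hh (r i) (τ i) (hτ i) (fun j => M (σ i j)) (fun j => hM _) (fun j => hcol j i)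

lemma pPreservesAll.of_subset_qfDef (hk : 1 ≤ k) (hSR : ∀ n, 1 ≤ n → S n ⊆ qfDef R n)
    (hh : pPreservesAll D h R) : pPreservesAll D h S := by
  intro n ρ hρ
  rcases Nat.eq_zero_or_pos n with rfl | hn
  · exact pPreserves_of_arity_zero hk ρ
  · exact hh.to_qfDef n ρ (hSR n hn hρ)

lemma RelPolyHom.of_pPreservesAll (hS : RelPolyHom S)
    (hpart : ∀ k, 1 ≤ k → ∀ (D : Set (Fin k → A)) (h : Op A k),
      pPreservesAll D h R → pPreservesAll D h S)
    (htot : ∀ k (g : Op A k), pPreservesAll Set.univ g S → pPreservesAll Set.univ g R) :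
    RelPolyHom R := by
  intro k hk D h hh
  obtain ⟨g, hgh, hg⟩ := hS k hk D h (hpart k hk D h hh)
  exact ⟨g, hgh, htot k g hg⟩

end Preservation

section Hull

variable {R : RelFamily A} {n : ℕ}

/-- For finite `A`, the least relation of `⟨R⟩_∄` containing `S`. -/
def qfHull (R : RelFamily A) (S : Set (Fin n → A)) : Set (Fin n → A) :=
  ⋂₀ {ρ | ρ ∈ qfDef R n ∧ S ⊆ ρ}

lemma subset_qfHull (S : Set (Fin n → A)) : S ⊆ qfHull R S :=
  Set.subset_sInter fun _ hρ => hρ.2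

lemma qfHull_mem_qfDef [Finite A] (S : Set (Fin n → A)) : qfHull R S ∈ qfDef R n :=
  sInter_mem_qfDef fun _ hρ => hρ.1

lemma comp_mem_of_mem_qfHull {S : Set (Fin n → A)} {a : Fin n → A} (ha : a ∈ qfHull R S)
    {m : ℕ} {τ : Set (Fin m → A)} (hτ : τ ∈ R m) (p : Fin m → Fin n)
    (hS : ∀ s ∈ S, (fun i => s (p i)) ∈ τ) : (fun i => a (p i)) ∈ τ :=
  Set.mem_sInter.1 ha {b | (fun i => b (p i)) ∈ τ} ⟨comap_mem_qfDef (mem_qfDef_of_mem hτ) p, hS⟩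

variable {k : ℕ} {col : Fin k → Fin n → A} {a : Fin n → A}

lemma factorsThrough_rows_of_mem_qfHull (hEq : {b : Fin 2 → A | b 0 = b 1} ∈ R 2)
    (ha : a ∈ qfHull R (Set.range col)) : a.FactorsThrough (fun i j => col j i) := by
  intro i i' hii'
  refine comp_mem_of_mem_qfHull ha hEq ![i, i'] ?_
  rintro _ ⟨j, rfl⟩
  exact congrFun hii' j

lemma pPreservesAll_extend_rows_of_mem_qfHull (ha : a ∈ qfHull R (Set.range col))
    (hfac : a.FactorsThrough (fun i j => col j i)) (e : (Fin k → A) → A) :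
    pPreservesAll (Set.range fun i j => col j i) (Function.extend (fun i j => col j i) a e) R := by
  intro m τ hτ M hM hcolM
  choose p hp using hM
  have hpa : (fun i => a (p i)) ∈ τ := by
    refine comp_mem_of_mem_qfHull ha hτ p ?_
    rintro _ ⟨j, rfl⟩
    simpa only [← hp] using hcolM j
  simpa only [← hp, hfac.extend_apply] using hpa

lemma RelPolyHom.qfHull_subset [Finite A] (hPH : RelPolyHom R)
    (hEq : {b : Fin 2 → A | b 0 = b 1} ∈ R 2) {ρ : Set (Fin n → A)} (hne : ρ.Nonempty)
    (hρ : ρ ∈ InvRels (PolOps R) n) : qfHull R ρ ⊆ ρ := by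
  intro a ha
  obtain ⟨k, col, -, rfl⟩ := (Set.toFinite ρ).fin_param
  obtain ⟨_, ⟨j₀, rfl⟩⟩ := hne
  have hk : 1 ≤ k := Fin.pos j₀
  have hfac := factorsThrough_rows_of_mem_qfHull hEq ha
  obtain ⟨g, hgh, hg⟩ := hPH k hk _ _
    (pPreservesAll_extend_rows_of_mem_qfHull ha hfac fun d => d ⟨0, hk⟩)
  have hga : ∀ i, g (fun j => col j i) = a i := fun i => by
    rw [hgh _ ⟨i, rfl⟩, hfac.extend_apply]
  simpa only [hga] using
    hρ k hk g hg (fun i j => col j i) (fun _ => Set.mem_univ _) (fun j => ⟨j, rfl⟩)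

theorem RelPolyHom.mem_qfDef_of_mem_InvRels [Finite A] (hPH : RelPolyHom R)
    (hEq : {b : Fin 2 → A | b 0 = b 1} ∈ R 2) {ρ : Set (Fin n → A)} (hne : ρ.Nonempty)
    (hρ : ρ ∈ InvRels (PolOps R) n) : ρ ∈ qfDef R n := by
  rw [← (subset_qfHull ρ).antisymm' (hPH.qfHull_subset hEq hne hρ)]
  exact qfHull_mem_qfDef ρ

end Hull

section Clone

variable {C : OpFamily A}

lemma eq_mem_Cdot (hC : IsClone C) : {b : Fin 2 → A | b 0 = b 1} ∈ Cdot C 2 :=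
  ⟨fun x => x 0, hC.1 1 0, rfl⟩

lemma graphRel_mem_Cdot {n : ℕ} {f : Op A n} (hf : f ∈ C n) : graphRel f ∈ Cdot C (n + 1) :=
  ⟨f, hf, rfl⟩

lemma Cdot_subset_Ccirc (hC : IsClone C) (n : ℕ) : Cdot C n ⊆ Ccirc C n := by
  cases n with
  | zero => exact fun _ h => h.elim
  | succ m =>
    rintro _ ⟨f, hf, rfl⟩
    exact ⟨fun x => f (fun i => x i.castSucc), hC.2 m (m + 1) f _ hf fun i => hC.1 _ _,
      fun x => x (Fin.last m), hC.1 _ _, rfl⟩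

lemma pPreservesAll_Ccirc_of_Cdot {k : ℕ} {g : Op A k}
    (hg : pPreservesAll Set.univ g (Cdot C)) : pPreservesAll Set.univ g (Ccirc C) := by
  rintro n _ ⟨f₁, hf₁, f₂, hf₂, rfl⟩ M - hcol
  let N : Fin (n + 1) → Fin k → A := Fin.snoc M fun j => f₁ fun i => M i j
  have hN₁ := hg (n + 1) _ (graphRel_mem_Cdot hf₁) N (fun _ => trivial) fun j => by
    simp [N, graphRel]
  have hN₂ := hg (n + 1) _ (graphRel_mem_Cdot hf₂) N (fun _ => trivial) fun j => by
    simpa [N, graphRel] using (hcol j).symm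
  simp only [N, graphRel, Set.mem_ofPred_eq, Fin.snoc_castSucc, Fin.snoc_last] at hN₁ hN₂
  exact hN₁.trans hN₂.symm

lemma empty_mem_qfDef_Cdot {n r : ℕ} (hn : 1 ≤ n) {f₁ f₂ : Op A r} (hf₁ : f₁ ∈ C r)
    (hf₂ : f₂ ∈ C r) (hf : ∀ x, f₁ x ≠ f₂ x) : (∅ : Set (Fin n → A)) ∈ qfDef (Cdot C) n := by
  have hempty : (∅ : Set (Fin n → A)) =
      {a | (fun _ : Fin (r + 1) => a ⟨0, hn⟩) ∈ graphRel f₁ ∩ graphRel f₂} := by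
    ext a
    simpa [graphRel] using fun h => hf _ ∘ h.trans ∘ Eq.symm
  rw [hempty]
  exact comap_mem_qfDef (inter_mem_qfDef (mem_qfDef_of_mem (graphRel_mem_Cdot hf₁))
    (mem_qfDef_of_mem (graphRel_mem_Cdot hf₂))) _

lemma qfDef_Ccirc_subset_qfDef_Cdot [Finite A] (hC : IsClone C) (hPH : RelPolyHom (Cdot C))
    {n : ℕ} (hn : 1 ≤ n) : qfDef (Ccirc C) n ⊆ qfDef (Cdot C) n := by
  rintro _ ⟨t, r, τ, σ, hτ, rfl⟩
  by_cases hne : ∀ i, (τ i).Nonempty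
  · refine qfDef_qfDef_subset n ⟨t, r, τ, σ, fun i => ?_, rfl⟩
    exact hPH.mem_qfDef_of_mem_InvRels (eq_mem_Cdot hC) (hne i)
      fun _ _ _ hg => pPreservesAll_Ccirc_of_Cdot hg _ _ (hτ i)
  · push Not at hne
    obtain ⟨i, hi⟩ := hne
    obtain ⟨f₁, hf₁, f₂, hf₂, hτi⟩ := hτ i
    have hρ : {a : Fin n → A | ∀ i, (fun j => a (σ i j)) ∈ τ i} = ∅ :=
      Set.eq_empty_of_forall_notMem fun a ha => by simpa [hi] using ha i
    rw [hρ]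
    exact empty_mem_qfDef_Cdot hn hf₁ hf₂ fun x hx => (hτi ▸ hi).subset hx

end Clone

end PaperPH

open PaperPH

/-- Let `A` be a finite algebra with clone of term operations `C`.
Then `⟨A;C•⟩` is polymorphism-homogeneous iff `⟨A;C°⟩` is polymorphism-homogeneous
and `⟨C•⟩_∄ = ⟨C°⟩_∄`. -/
theorem relPolyHom_Cdot_iff (A : Type*) [Fintype A]
    (C : OpFamily A) (hC : IsClone C) :
    RelPolyHom (Cdot C) ↔
      (RelPolyHom (Ccirc C) ∧ ∀ n, 1 ≤ n → qfDef (Cdot C) n = qfDef (Ccirc C) n) := by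
  constructor
  · intro hPH
    refine ⟨hPH.of_pPreservesAll (fun _ _ _ _ hh => hh.mono (Cdot_subset_Ccirc hC))
      fun _ _ => pPreservesAll_Ccirc_of_Cdot, fun n hn => ?_⟩
    exact (qfDef_mono (Cdot_subset_Ccirc hC) n).antisymm (qfDef_Ccirc_subset_qfDef_Cdot hC hPH hn)
  · rintro ⟨hPH, hqf⟩
    refine hPH.of_pPreservesAll (fun _ hk _ _ hh => ?_) fun _ _ hg => hg.mono (Cdot_subset_Ccirc hC)
    exact hh.of_subset_qfDef hk fun n hn _ hρ => (hqf n hn).ge (mem_qfDef_of_mem hρ)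
end

section
/- Let A be a two-element semilattice and C = Clo(A). Then the relational structure ⟨A;C•⟩ is not polymorphism-homogeneous. -/
open PaperPH

namespace PaperPH

/-- The basic operations of a meet-semilattice `(A; ⊓)`: the single binary
operation `⊓`. -/
def meetOps (A : Type*) [SemilatticeInf A] : OpFamily A := fun n =>
  match n with
  | 2 => ({ fun x => x 0 ⊓ x 1 } : Set (Op A 2))
  | _ => ∅

/-- The algebra `(B; opB)` belongs to `HSP(A; opA)`, the variety generated by
`(A; opA)` (for the signature with one binary operation symbol): it is a
homomorphic image of a subalgebra of a direct power of `(A; opA)`. -/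
def InHSPbin.{u, v} (A : Type u) (opA : A → A → A) (B : Type v) (opB : B → B → B) : Prop :=
  ∃ (I : Type v) (S : Set (I → A)) (π : (I → A) → B),
    (∀ x ∈ S, ∀ y ∈ S, (fun i => opA (x i) (y i)) ∈ S) ∧
    (∀ x ∈ S, ∀ y ∈ S, π (fun i => opA (x i) (y i)) = opB (π x) (π y)) ∧
    (∀ b : B, ∃ x ∈ S, π x = b)

/-- The algebra `(A; opA)` (one binary operation) is injective in the variety
`HSP(A; opA)`: for members `B ≤ C` of the variety, every homomorphism `B → A`
extends to a homomorphism `C → A`. -/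
def InjHSPbin.{u, v} (A : Type u) (opA : A → A → A) : Prop :=
  ∀ (B : Type v) (opB : B → B → B), InHSPbin A opA B opB →
    ∀ S : Set B, (∀ x ∈ S, ∀ y ∈ S, opB x y ∈ S) →
      ∀ h : B → A, (∀ x ∈ S, ∀ y ∈ S, h (opB x y) = opA (h x) (h y)) →
        ∃ g : B → A, (∀ x ∈ S, g x = h x) ∧ ∀ x y : B, g (opB x y) = opA (g x) (g y)

/-- `A` is (isomorphic to) the meet-semilattice reduct of a finite distributive
lattice. -/
def SemilatticeReductOfFinDistribLattice (A : Type*) [SemilatticeInf A] : Prop :=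
  ∃ (L : Type) (_ : DistribLattice L) (_ : Fintype L) (φ : A ≃ L),
    ∀ a b : A, φ (a ⊓ b) = φ a ⊓ φ b

end PaperPH

namespace PaperPH

variable {A : Type*}

section Aux
variable [SemilatticeInf A]

/-- meet-homomorphisms of powers -/
def QQ (A : Type*) [SemilatticeInf A] : OpFamily A :=
  fun n => { f | ∀ x y : Fin n → A, f (x ⊓ y) = f x ⊓ f y }

lemma QQ_clone : IsClone (QQ A) := by
  constructor
  · intro n i x y; rfl
  · intro n k f g hf hg x y
    calc (fun x => f (fun i => g i x)) (x ⊓ y)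
        = f ((fun i => g i x) ⊓ (fun i => g i y)) := by
          show f _ = f _
          congr 1; funext i; exact hg i x y
      _ = f (fun i => g i x) ⊓ f (fun i => g i y) := hf _ _

lemma meetOps_sub_QQ : ∀ m, meetOps A m ⊆ QQ A m := by
  intro m f hf
  match m with
  | 0 => exact absurd hf (Set.notMem_empty f)
  | 1 => exact absurd hf (Set.notMem_empty f)
  | 2 =>
    have hf' : f = fun x : Fin 2 → A => x 0 ⊓ x 1 := hf
    subst hf'
    intro x y
    exact inf_inf_inf_comm (x 0) (y 0) (x 1) (y 1)
  | (n+3) => exact absurd hf (Set.notMem_empty f)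

lemma clo_sub_QQ : ∀ n, CloGen (meetOps A) n ⊆ QQ A n :=
  fun _ _ hf => hf (QQ A) QQ_clone meetOps_sub_QQ

end Aux

/-- basis vectors -/
def vv {A : Type*} [DecidableEq A] (z t : A) : Fin 3 → Fin 3 → A :=
  fun j i => if i = j then t else z

open Classical in
noncomputable def hfun {A : Type*} (z t : A) : Op A 3 :=
  fun x => if x 2 = t then z else t

section Main
variable [SemilatticeInf A]

lemma aux_notPH (z t : A) (hzt : z ≠ t) (hm : z ⊓ t = z)
    (hall : ∀ a : A, a = z ∨ a = t) :
    ¬ RelPolyHom (Cdot (CloGen (meetOps A))) := by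
  classical
  have hm' : t ⊓ z = z := by rw [inf_comm]; exact hm
  set v : Fin 3 → Fin 3 → A := vv z t with hv
  set D : Set (Fin 3 → A) := {v 0, v 1, v 2} with hD
  set h : Op A 3 := hfun z t with hh
  have hv00 : v 0 0 = t := if_pos rfl
  have hv01 : v 1 0 = z := if_neg (by decide)
  have hv02 : v 2 0 = z := if_neg (by decide)
  have hv10 : v 0 1 = z := if_neg (by decide)
  have hv11 : v 1 1 = t := if_pos rfl
  have hv12 : v 2 1 = z := if_neg (by decide)
  have hv20 : v 0 2 = z := if_neg (by decide)
  have hv21 : v 1 2 = z := if_neg (by decide)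
  have hv22 : v 2 2 = t := if_pos rfl
  have hh0 : h (v 0) = t := by
    show (if v 0 2 = t then z else t) = t
    rw [hv20]; exact if_neg hzt
  have hh1 : h (v 1) = t := by
    show (if v 1 2 = t then z else t) = t
    rw [hv21]; exact if_neg hzt
  have hh2 : h (v 2) = z := by
    show (if v 2 2 = t then z else t) = z
    rw [hv22]; exact if_pos rfl
  -- partial preservation
  have hpres : pPreservesAll D h (Cdot (CloGen (meetOps A))) := by
    intro n ρ hρ
    cases n with
    | zero => exact hρ.elim
    | succ m =>
      obtain ⟨f, hfC, rfl⟩ := hρ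
      have fQ : ∀ x y : Fin m → A, f (x ⊓ y) = f x ⊓ f y := clo_sub_QQ m hfC
      intro M hrows hcols
      have hcol : ∀ j, f (fun i : Fin m => M i.castSucc j) = M (Fin.last m) j := fun j => hcols j
      show f (fun i => h (M i.castSucc)) = h (M (Fin.last m))
      set u : Fin m → A := fun i => h (M i.castSucc) with hu
      have hrow3 : ∀ i : Fin m, M i.castSucc = v 0 ∨ M i.castSucc = v 1 ∨ M i.castSucc = v 2 :=
        fun i => hrows i.castSucc
      -- u ⊓ col d = col d for d = 0, 1
      have key01 : ∀ d : Fin 3, d = 0 ∨ d = 1 →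
          (u ⊓ fun i : Fin m => M i.castSucc d) = (fun i : Fin m => M i.castSucc d) := by
        intro d hd
        funext i
        show u i ⊓ M i.castSucc d = M i.castSucc d
        have hui : u i = h (M i.castSucc) := rfl
        rcases hrow3 i with hr | hr | hr <;> rw [hui, hr] <;>
          rcases hd with rfl | rfl <;>
          simp only [hh0, hh1, hh2, hv00, hv01, hv02, hv10, hv11, hv12] <;>
          first | exact inf_idem _ | exact hm' | exact hm
      -- col 0 ⊓ col 1 = const z
      have keyz : ((fun i : Fin m => M i.castSucc 0) ⊓ fun i : Fin m => M i.castSucc 1) = (fun _ => z) := by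
        funext i
        show M i.castSucc 0 ⊓ M i.castSucc 1 = z
        rcases hrow3 i with hr | hr | hr <;> rw [hr] <;>
          simp only [hv00, hv01, hv02, hv10, hv11, hv12] <;>
          first | exact inf_idem _ | exact hm' | exact hm
      -- u ⊓ col 2 = const z
      have key2 : (u ⊓ fun i : Fin m => M i.castSucc 2) = (fun _ => z) := by
        funext i
        show u i ⊓ M i.castSucc 2 = z
        have hui : u i = h (M i.castSucc) := rfl
        rcases hrow3 i with hr | hr | hr <;> rw [hui, hr] <;>
          simp only [hh0, hh1, hh2, hv20, hv21, hv22] <;>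
          first | exact inf_idem _ | exact hm' | exact hm
      rcases hrows (Fin.last m) with hL | hL | hL
      · -- last row is v 0
        rw [hL, hh0]
        have h1 : f u ⊓ f (fun i : Fin m => M i.castSucc 0) = f (fun i : Fin m => M i.castSucc 0) := by
          rw [← fQ]; exact congrArg f (key01 0 (Or.inl rfl))
        rw [hcol 0, hL, hv00] at h1
        rcases hall (f u) with hfu | hfu
        · rw [hfu, hm] at h1; exact absurd h1 hzt
        · exact hfu
      · -- last row is v 1
        rw [hL, hh1]
        have h1 : f u ⊓ f (fun i : Fin m => M i.castSucc 1) = f (fun i : Fin m => M i.castSucc 1) := by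
          rw [← fQ]; exact congrArg f (key01 1 (Or.inr rfl))
        rw [hcol 1, hL, hv11] at h1
        rcases hall (f u) with hfu | hfu
        · rw [hfu, hm] at h1; exact absurd h1 hzt
        · exact hfu
      · -- last row is v 2
        rw [hL, hh2]
        have hz : f (fun _ => z) = z := by
          rw [← keyz, fQ, hcol 0, hcol 1, hL, hv02, hv12]
          exact inf_idem z
        have h1 : f u ⊓ f (fun i : Fin m => M i.castSucc 2) = z := by
          rw [← fQ]
          rw [show (u ⊓ fun i : Fin m => M i.castSucc 2) = (fun _ => z) from key2]
          exact hz
        rw [hcol 2, hL, hv22] at h1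
        rcases hall (f u) with hfu | hfu
        · exact hfu
        · rw [hfu, inf_idem] at h1; exact absurd h1.symm hzt
  -- no extension
  intro hPH
  obtain ⟨g, hg, hgp⟩ := hPH 3 (by norm_num) D h hpres
  have hmeet : (fun x : Fin 2 → A => x 0 ⊓ x 1) ∈ CloGen (meetOps A) 2 :=
    fun C hC hsub => hsub 2 rfl
  have hgraph : graphRel (fun x : Fin 2 → A => x 0 ⊓ x 1) ∈ Cdot (CloGen (meetOps A)) 3 :=
    ⟨_, hmeet, rfl⟩
  have hg2 : ∀ a b : Fin 3 → A, g (a ⊓ b) = g a ⊓ g b := by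
    intro a b
    have := hgp 3 _ hgraph
      (fun i : Fin 3 => if i.val = 0 then a else if i.val = 1 then b else a ⊓ b)
      (fun i => Set.mem_univ _) (fun j => rfl)
    exact this.symm
  have hgv0 : g (v 0) = t := by rw [hg (v 0) (Set.mem_insert _ _)]; exact hh0
  have hgv1 : g (v 1) = t := by
    rw [hg (v 1) (Set.mem_insert_of_mem _ (Set.mem_insert _ _))]; exact hh1
  have hgv2 : g (v 2) = z := by
    rw [hg (v 2) (Set.mem_insert_of_mem _ (Set.mem_insert_of_mem _ rfl))]; exact hh2
  have e1 : v 0 ⊓ v 1 = (fun _ => z) := by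
    funext i
    show v 0 i ⊓ v 1 i = z
    fin_cases i <;>
      simp only [hv00, hv01, hv10, hv11, hv20, hv21] <;>
      first | exact inf_idem _ | exact hm' | exact hm
  have e2 : (fun _ : Fin 3 => z) ⊓ v 2 = (fun _ => z) := by
    funext i
    show z ⊓ v 2 i = z
    fin_cases i <;> simp only [hv02, hv12, hv22] <;>
      first | exact inf_idem _ | exact hm
  have r1 : g (fun _ : Fin 3 => z) = t := by
    rw [← e1, hg2, hgv0, hgv1]; exact inf_idem t
  have r2 : g (fun _ : Fin 3 => z) = z := by
    rw [← e2, hg2, r1, hgv2]; exact hm'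
  exact hzt ((r1.symm.trans r2).symm)

end Main

end PaperPH

/-- If `A` is a two-element semilattice and `C = Clo(A)`, then the
relational structure `⟨A;C•⟩` is not polymorphism-homogeneous. -/
theorem two_element_semilattice_Cdot_not_polyHom (A : Type*) [Fintype A] [SemilatticeInf A]
    (hA : Fintype.card A = 2)
    (C : OpFamily A) (hC : C = CloGen (meetOps A)) :
    ¬ RelPolyHom (Cdot C) := by
  subst hC
  have hA' : Nat.card A = 2 := by rw [Nat.card_eq_fintype_card]; exact hA
  obtain ⟨x, y, hxy, hU⟩ := Nat.card_eq_two_iff.mp hA'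
  have hall : ∀ a : A, a = x ∨ a = y := by
    intro a
    have : a ∈ ({x, y} : Set A) := hU ▸ Set.mem_univ a
    rcases this with h | h
    · exact Or.inl h
    · exact Or.inr h
  rcases hall (x ⊓ y) with hxy2 | hxy2
  · exact aux_notPH x y hxy hxy2 hall
  · exact aux_notPH y x hxy.symm (by rw [inf_comm]; exact hxy2) (fun a => (hall a).symm)
end

section
/- If A is a finite semilattice with at least two elements and C = Clo(A), then the relational structure ⟨A;C•⟩ is not polymorphism-homogeneous. -/
open PaperPH

namespace PaperPH

/-- The family of "meet terms": infima over a nonempty set of variables. -/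
def MeetTerms (A : Type*) [SemilatticeInf A] : OpFamily A := fun n =>
  { f | ∃ T : Finset (Fin n), ∃ hT : T.Nonempty, f = fun x => T.inf' hT x }

lemma meetTerms_isClone (A : Type*) [SemilatticeInf A] : IsClone (MeetTerms A) := by
  constructor
  · intro n i
    exact ⟨{i}, Finset.singleton_nonempty i, by funext x; simp⟩
  · rintro n k f g ⟨T, hT, rfl⟩ hg
    choose S hS hgS using hg
    refine ⟨T.biUnion S, hT.biUnion fun i _ => hS i, ?_⟩
    funext x
    show T.inf' hT (fun i => g i x) = _
    have hx : (fun i => g i x) = fun i => (S i).inf' (hS i) x :=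
      funext fun i => by rw [hgS i]
    rw [hx]
    exact (Finset.inf'_biUnion x hT hS).symm

lemma meetOps_subset_meetTerms (A : Type*) [SemilatticeInf A] :
    ∀ m, meetOps A m ⊆ MeetTerms A m := by
  intro m
  match m with
  | 0 | 1 => exact fun f hf => absurd hf (Set.notMem_empty f)
  | 2 =>
    rintro f hf
    rcases hf with rfl
    refine ⟨{0, 1}, by simp, ?_⟩
    funext x
    simp
  | (n + 3) => exact fun f hf => absurd hf (Set.notMem_empty f)

lemma clo_subset_meetTerms (A : Type*) [SemilatticeInf A] :
    ∀ n, CloGen (meetOps A) n ⊆ MeetTerms A n := by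
  intro n f hf
  exact hf (MeetTerms A) (meetTerms_isClone A) (meetOps_subset_meetTerms A)

lemma exists_lt_of_two_le_card (A : Type*) [Fintype A] [SemilatticeInf A]
    (hA : 2 ≤ Fintype.card A) : ∃ a b : A, a < b := by
  have : Nontrivial A := Fintype.one_lt_card_iff_nontrivial.mp hA
  obtain ⟨x, y, hxy⟩ := exists_pair_ne A
  by_cases h : x ⊓ y = x
  · exact ⟨x, y, lt_of_le_of_ne (inf_eq_left.mp h) hxy⟩
  · exact ⟨x ⊓ y, x, lt_of_le_of_ne inf_le_left h⟩

end PaperPH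

theorem nontrivial_semilattice_Cdot_not_polyHom' (A : Type*) [Fintype A] [SemilatticeInf A]
    (hA : 2 ≤ Fintype.card A)
    (C : OpFamily A) (hC : C = CloGen (meetOps A)) :
    ¬ RelPolyHom (Cdot C) := by
  classical
  obtain ⟨a, b, hab⟩ := exists_lt_of_two_le_card A hA
  have hne : a ≠ b := ne_of_lt hab
  -- the three tuples with a single `b`
  set d : Fin 3 → Fin 3 → A := fun t j => if j = t then b else a with hd
  have hda : ∀ t j, a ≤ d t j := by
    intro t j; by_cases h : j = t <;> simp [hd, h, hab.le]
  have hdtt : ∀ t, d t t = b := by intro t; simp [hd]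
  -- for two distinct d's, at each coordinate one of them is `a`
  have hmeet : ∀ t₁ t₂ : Fin 3, t₁ ≠ t₂ → ∀ j, d t₁ j = a ∨ d t₂ j = a := by
    intro t₁ t₂ h j
    rcases ne_or_eq j t₁ with h1 | rfl
    · left; simp [hd, h1]
    · right; simp [hd, h]
  set D : Set (Fin 3 → A) := Set.range d with hD
  set h : Op A 3 := fun x => if x = d 2 then a else b with hh
  have hinj : ∀ t₁ t₂ : Fin 3, d t₁ = d t₂ → t₁ = t₂ := by
    intro t₁ t₂ he
    by_contra hne'
    have h1 : d t₁ t₁ = d t₂ t₁ := congrFun he t₁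
    rw [hdtt t₁] at h1
    have h2 : d t₂ t₁ = a := by simp [hd, hne']
    exact hne (by rw [← h2, ← h1])
  intro hPH
  obtain ⟨g, hg_ext, hg_pres⟩ := hPH 3 (by norm_num) D h (by
    -- h is a partial polymorphism
    intro m ρ hρ
    match m with
    | 0 => exact absurd hρ (Set.notMem_empty ρ)
    | n + 1 =>
      obtain ⟨f, hf, rfl⟩ := hρ
      obtain ⟨T, hT, rfl⟩ := clo_subset_meetTerms A n (hC ▸ hf)
      intro M hMD hMcol
      simp only [graphRel, Set.mem_setOf_eq] at hMcol ⊢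
      by_cases hall : ∀ i ∈ T, ∀ i' ∈ T, M i.castSucc = M i'.castSucc
      · obtain ⟨i₀, hi₀⟩ := hT
        have hlast : M (Fin.last n) = M i₀.castSucc := by
          funext j
          rw [← hMcol j]
          exact Finset.inf'_eq_of_forall _ _ fun i hi => congrFun (hall i hi i₀ hi₀) j
        rw [hlast]
        exact Finset.inf'_eq_of_forall _ _ fun i hi => congrArg h (hall i hi i₀ hi₀)
      · exfalso
        push_neg at hall
        obtain ⟨i₁, hi₁, i₂, hi₂, hne12⟩ := hall
        obtain ⟨t₁, ht₁⟩ := hMD i₁.castSucc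
        obtain ⟨t₂, ht₂⟩ := hMD i₂.castSucc
        have htne : t₁ ≠ t₂ := fun he => hne12 (by rw [← ht₁, ← ht₂, he])
        have hconst : ∀ j, M (Fin.last n) j = a := by
          intro j
          rw [← hMcol j]
          apply le_antisymm
          · rcases hmeet t₁ t₂ htne j with hc | hc
            · exact Finset.inf'_le_of_le _ hi₁ (by rw [← ht₁]; exact hc.le)
            · exact Finset.inf'_le_of_le _ hi₂ (by rw [← ht₂]; exact hc.le)
          · apply Finset.le_inf'
            intro i hi
            obtain ⟨t, ht⟩ := hMD i.castSucc
            rw [← ht]; exact hda t j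
        obtain ⟨t, ht⟩ := hMD (Fin.last n)
        have hta := hconst t
        rw [← ht, hdtt t] at hta
        exact hne hta.symm
    )
  -- g is a ⊓-homomorphism
  have hmeet_mem : (fun x => x 0 ⊓ x 1) ∈ C 2 := by
    rw [hC]; intro C' hC' hsub
    exact hsub 2 rfl
  have hgraph : graphRel (fun x : Fin 2 → A => x 0 ⊓ x 1) ∈ Cdot C 3 :=
    ⟨_, hmeet_mem, rfl⟩
  have ghom : ∀ u v : Fin 3 → A, g (fun j => u j ⊓ v j) = g u ⊓ g v := by
    intro u v
    have hcol := hg_pres 3 _ hgraph ![u, v, fun j => u j ⊓ v j]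
      (fun _ => Set.mem_univ _) (fun j => rfl)
    exact hcol.symm
  have hgd : ∀ t, g (d t) = h (d t) := fun t => hg_ext (d t) ⟨t, rfl⟩
  have hd02 : d 0 ≠ d 2 := fun he => (by decide : (0 : Fin 3) ≠ 2) (hinj 0 2 he)
  have hd12 : d 1 ≠ d 2 := fun he => (by decide : (1 : Fin 3) ≠ 2) (hinj 1 2 he)
  have h0 : h (d 0) = b := by rw [hh]; exact if_neg hd02
  have h1 : h (d 1) = b := by rw [hh]; exact if_neg hd12
  have h2 : h (d 2) = a := by rw [hh]; exact if_pos rfl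
  have hca : (fun j => d 0 j ⊓ d 1 j) = fun _ : Fin 3 => a := by
    funext j
    rcases hmeet 0 1 (by decide) j with hc | hc
    · rw [hc]; exact inf_eq_left.mpr (hda 1 j)
    · rw [hc]; exact inf_eq_right.mpr (hda 0 j)
  have hga : g (fun _ : Fin 3 => a) = b := by
    rw [← hca, ghom, hgd 0, hgd 1, h0, h1, inf_idem]
  have hca2 : (fun j : Fin 3 => (fun _ : Fin 3 => a) j ⊓ d 2 j) = fun _ : Fin 3 => a := by
    funext j; exact inf_eq_left.mpr (hda 2 j)
  have hkey : b = b ⊓ a := by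
    conv_lhs => rw [← hga, ← hca2, ghom, hgd 2, h2, hga]
  have hba : b ≤ a := inf_eq_left.mp hkey.symm
  exact hne (le_antisymm hab.le hba)


/-- If `A` is a finite semilattice with at least two elements and
`C = Clo(A)`, then the relational structure `⟨A;C•⟩` is not
polymorphism-homogeneous. -/
theorem nontrivial_semilattice_Cdot_not_polyHom (A : Type*) [Fintype A] [SemilatticeInf A]
    (hA : 2 ≤ Fintype.card A)
    (C : OpFamily A) (hC : C = CloGen (meetOps A)) :
    ¬ RelPolyHom (Cdot C) :=
  nontrivial_semilattice_Cdot_not_polyHom' A hA C hC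
end

section
/- Let A = (A; f) be a finite monounary algebra and C = Clo(A). Then A is polymorphism-homogeneous if and only if for each natural number k there exists a quantifier-free primitive positive formula Ψ_k(x) over C° such that for all a ∈ A: Ψ_k(a) holds if and only if there exists a_0 ∈ A with a = f^k(a_0). -/
open PaperPH

namespace PaperPH

/-- The basic operations of a monounary algebra `(A; f)`: the single unary
operation `f`. -/
def unOps (A : Type*) (f : A → A) : OpFamily A := fun n =>
  match n with
  | 1 => ({ fun x => f (x 0) } : Set (Op A 1))
  | _ => ∅

/-- An element `a` of a monounary algebra `(A; f)` is cyclic if `f^[k] a = a`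
for some `k ≥ 1`. -/
def IsCyclicElem {A : Type*} (f : A → A) (a : A) : Prop :=
  ∃ k : ℕ, 1 ≤ k ∧ f^[k] a = a

/-- The height of an element `a` of a finite monounary algebra `(A; f)`: the least
nonnegative integer `m` such that `f^[m] a` is cyclic. -/
noncomputable def height {A : Type*} (f : A → A) (a : A) : ℕ :=
  sInf { m : ℕ | IsCyclicElem f (f^[m] a) }

/-- The monounary algebra `(B; fB)` belongs to `HSP(A; f)`, the variety generated by
`(A; f)` (signature with one unary operation symbol): it is a homomorphic image of a
subalgebra of a direct power of `(A; f)`. -/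
def InHSPun.{u, v} (A : Type u) (f : A → A) (B : Type v) (fB : B → B) : Prop :=
  ∃ (I : Type v) (S : Set (I → A)) (π : (I → A) → B),
    (∀ x ∈ S, (fun i => f (x i)) ∈ S) ∧
    (∀ x ∈ S, π (fun i => f (x i)) = fB (π x)) ∧
    (∀ b : B, ∃ x ∈ S, π x = b)

/-- The monounary algebra `(A; f)` is injective in the variety `HSP(A; f)`: for
members `B ≤ C` of the variety, every homomorphism `B → A` extends to a
homomorphism `C → A`. -/
def InjHSPun.{u, v} (A : Type u) (f : A → A) : Prop :=
  ∀ (B : Type v) (fB : B → B), InHSPun A f B fB →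
    ∀ S : Set B, (∀ x ∈ S, fB x ∈ S) →
      ∀ h : B → A, (∀ x ∈ S, h (fB x) = f (h x)) →
        ∃ g : B → A, (∀ x ∈ S, g x = h x) ∧ ∀ x : B, g (fB x) = f (g x)

end PaperPH


section MonoAux

open Function

variable {A : Type*} (f : A → A)

/-- The clone generated by a single unary operation consists exactly of the
operations `x ↦ f^[p] (x j)`. -/
lemma mem_cloGen_iff {n : ℕ} (g : Op A n) :
    g ∈ CloGen (unOps A f) n ↔ ∃ (p : ℕ) (j : Fin n), g = fun x => f^[p] (x j) := by
  constructor
  · intro hg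
    refine hg (fun n => {g | ∃ p : ℕ, ∃ j : Fin n, g = fun x => f^[p] (x j)}) ⟨?_, ?_⟩ ?_
    · intro n i
      exact ⟨0, i, rfl⟩
    · rintro n k t g ⟨p, j, rfl⟩ hgmem
      obtain ⟨q, i, hgi⟩ := hgmem j
      refine ⟨p + q, i, ?_⟩
      funext x
      simp only [hgi, Function.iterate_add_apply]
    · intro m t ht
      match m, t, ht with
      | 0, t, ht => exact ht.elim
      | 1, t, ht => exact ⟨1, 0, ht⟩
      | (n+2), t, ht => exact ht.elim
  · rintro ⟨p, j, rfl⟩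
    intro C hC hF
    induction p with
    | zero => exact hC.1 n j
    | succ p ih =>
      have h1 : (fun y : Fin 1 → A => f (y 0)) ∈ C 1 := hF 1 rfl
      have h2 := hC.2 1 n (fun y => f (y 0))
        (fun _ => fun x => f^[p] (x j)) h1 (fun _ => ih)
      have heq : (fun x : Fin n → A => f^[p+1] (x j))
          = fun x : Fin n → A => f (f^[p] (x j)) := by
        funext x
        exact Function.iterate_succ_apply' f p (x j)
      rw [heq]
      exact h2

/-- Componentwise action of `f` on `A^k`. -/
def cwF (k : ℕ) : (Fin k → A) → (Fin k → A) := fun x j => f (x j)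

lemma cwF_iterate {k : ℕ} (s : ℕ) (x : Fin k → A) :
    (cwF f k)^[s] x = fun j => f^[s] (x j) := by
  induction s with
  | zero => rfl
  | succ s ih =>
    rw [Function.iterate_succ_apply', ih]
    funext j
    simp [cwF, Function.iterate_succ_apply']

lemma closedUnder_iff {k : ℕ} (B : Set (Fin k → A)) :
    ClosedUnder (CloGen (unOps A f)) k B ↔ ∀ x ∈ B, cwF f k x ∈ B := by
  constructor
  · intro hcl x hx
    exact hcl 1 (fun y => f (y 0)) ((mem_cloGen_iff f _).mpr ⟨1, 0, rfl⟩)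
      (fun _ => x) (fun _ => hx)
  · intro hcl n t ht M hM
    obtain ⟨p, j0, rfl⟩ := (mem_cloGen_iff f t).mp ht
    have key : ∀ (p : ℕ) (x : Fin k → A), x ∈ B → (fun j => f^[p] (x j)) ∈ B := by
      intro p
      induction p with
      | zero => intro x hx; exact hx
      | succ p ih =>
        intro x hx
        exact ih (cwF f k x) (hcl x hx)
    exact key p (M j0) (hM j0)

lemma isHomOn_iff {k : ℕ} (B : Set (Fin k → A)) (h : Op A k) :
    IsHomOn (CloGen (unOps A f)) B h ↔
      ∀ x ∈ B, ∀ p : ℕ, h (fun j => f^[p] (x j)) = f^[p] (h x) := by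
  constructor
  · intro H x hx p
    exact H 1 (fun y => f^[p] (y 0)) ((mem_cloGen_iff f _).mpr ⟨p, 0, rfl⟩)
      (fun _ => x) (fun _ => hx)
  · intro H n t ht M hM
    obtain ⟨p, j0, rfl⟩ := (mem_cloGen_iff f t).mp ht
    exact H (M j0) (hM j0) p

lemma hom_iter {k : ℕ} {B : Set (Fin k → A)} (hB : ∀ x ∈ B, cwF f k x ∈ B)
    {h : Op A k} (hh : ∀ x ∈ B, h (cwF f k x) = f (h x)) :
    ∀ p : ℕ, ∀ x ∈ B, h ((cwF f k)^[p] x) = f^[p] (h x) := by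
  intro p
  induction p with
  | zero => intro x _; rfl
  | succ p ih =>
    intro x hx
    rw [Function.iterate_succ_apply, ih (cwF f k x) (hB x hx), hh x hx]
    rfl

lemma closed_iter {k : ℕ} {B : Set (Fin k → A)} (hB : ∀ x ∈ B, cwF f k x ∈ B) :
    ∀ p : ℕ, ∀ x ∈ B, (cwF f k)^[p] x ∈ B := by
  intro p
  induction p with
  | zero => intro x hx; exact hx
  | succ p ih =>
    intro x hx
    rw [Function.iterate_succ_apply]
    exact ih (cwF f k x) (hB x hx)

lemma iterate_period {k : ℕ} (x : Fin k → A) (i d : ℕ) (hd : 0 < d)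
    (hper : (cwF f k)^[i] x = (cwF f k)^[i + d] x) :
    ∀ e, (cwF f k)^[i + e] x = (cwF f k)^[i + e % d] x := by
  intro e
  induction e using Nat.strong_induction_on with
  | _ e ih =>
    by_cases he : e < d
    · rw [Nat.mod_eq_of_lt he]
    · have hde : d ≤ e := le_of_not_gt he
      have h1 : (cwF f k)^[i + e] x = (cwF f k)^[i + (e - d)] x := by
        have h2 : i + e = (e - d) + (i + d) := by omega
        rw [h2, Function.iterate_add_apply, ← hper, ← Function.iterate_add_apply]
        congr 1
        omega
      rw [h1, ih (e - d) (by omega), Nat.mod_eq_sub_mod hde]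

/-- The key one-point extension step for partial homomorphisms of powers of a
monounary algebra, assuming the images of the iterates of `f` are definable by
systems of "diagonal" equations. -/
lemma extend_step
    (hQ : ∀ s : ℕ, ∃ (t : ℕ) (m l : Fin t → ℕ), ∀ a : A,
      (∃ a₀, a = f^[s] a₀) ↔ ∀ i, f^[m i] a = f^[l i] a)
    {k : ℕ} (hk : 1 ≤ k) (B : Set (Fin k → A))
    (hB : ∀ x ∈ B, cwF f k x ∈ B) (h : Op A k)
    (hh : ∀ x ∈ B, h (cwF f k x) = f (h x)) (x : Fin k → A) (hx : x ∉ B) :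
    ∃ (B' : Set (Fin k → A)) (h' : Op A k), B ⊆ B' ∧ x ∈ B' ∧
      (∀ y ∈ B', cwF f k y ∈ B') ∧ (∀ y ∈ B, h' y = h y) ∧
      (∀ y ∈ B', h' (cwF f k y) = f (h' y)) := by
  classical
  -- choose the value `a` to assign to `x`
  have hexa : ∃ a : A, (∀ s : ℕ, (cwF f k)^[s] x ∈ B →
      h ((cwF f k)^[s] x) = f^[s] a) ∧
      (∀ i j : ℕ, (cwF f k)^[i] x = (cwF f k)^[j] x → f^[i] a = f^[j] a) := by
    by_cases hc : ∃ s, (cwF f k)^[s] x ∈ B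
    · -- the orbit of x enters B
      set s := Nat.find hc with hsdef
      have hs : (cwF f k)^[s] x ∈ B := Nat.find_spec hc
      have hmin : ∀ q < s, (cwF f k)^[q] x ∉ B := fun q hq => Nat.find_min hc hq
      have hs0 : 0 < s := by
        rcases Nat.eq_zero_or_pos s with h0 | h0
        · exact absurd (by simpa [h0] using hs) hx
        · exact h0
      obtain ⟨t, mm, ll, hml⟩ := hQ s
      set y := (cwF f k)^[s] x with hy
      set b := h y with hb
      -- b lies in the image of f^[s]
      have hbsat : ∀ i, f^[mm i] b = f^[ll i] b := by
        intro i
        have hcoord : (cwF f k)^[mm i] y = (cwF f k)^[ll i] y := by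
          rw [cwF_iterate, cwF_iterate]
          funext j
          have hyj : ∃ a₀, y j = f^[s] a₀ := ⟨x j, by rw [hy, cwF_iterate]⟩
          exact (hml (y j)).mp hyj i
        have h1 := hom_iter f hB hh (mm i) y hs
        have h2 := hom_iter f hB hh (ll i) y hs
        rw [← h1, ← h2, hcoord]
      obtain ⟨a, ha⟩ := (hml b).mpr hbsat
      -- the orbit is injective up to s
      have hinj : ∀ i j : ℕ, i < j → j ≤ s → (cwF f k)^[i] x ≠ (cwF f k)^[j] x := by
        intro i j hij hjs heq
        have hd : 0 < j - i := by omega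
        have hper : (cwF f k)^[i] x = (cwF f k)^[i + (j - i)] x := by
          rw [show i + (j - i) = j by omega]
          exact heq
        have h2 := iterate_period f x i (j - i) hd hper (s - i)
        rw [show i + (s - i) = s by omega] at h2
        have hidx : i + (s - i) % (j - i) < s := by
          have := Nat.mod_lt (s - i) hd
          omega
        exact hmin _ hidx (h2 ▸ hs)
      have hval : ∀ q : ℕ, (cwF f k)^[q] x ∈ B →
          h ((cwF f k)^[q] x) = f^[q] a := by
        intro q hq
        have hqs : s ≤ q := by
          by_contra hlt
          exact hmin q (by omega) hq
        have hsplit : (cwF f k)^[q] x = (cwF f k)^[q - s] y := by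
          rw [hy, ← Function.iterate_add_apply]
          congr 1
          omega
        rw [hsplit, hom_iter f hB hh (q - s) y hs, ← hb, ha,
          ← Function.iterate_add_apply]
        congr 1
        omega
      have key : ∀ i j : ℕ, i ≤ j → (cwF f k)^[i] x = (cwF f k)^[j] x →
          f^[i] a = f^[j] a := by
        intro i j hle heq
        rcases Nat.eq_or_lt_of_le hle with heqij | hlt
        · rw [heqij]
        · by_cases hjs : j ≤ s
          · exact absurd heq (hinj i j hlt hjs)
          · have hjB : (cwF f k)^[j] x ∈ B := by
              rw [show j = (j - s) + s from by omega, Function.iterate_add_apply]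
              exact closed_iter f hB (j - s) _ hs
            have hiB : (cwF f k)^[i] x ∈ B := heq ▸ hjB
            rw [← hval i hiB, ← hval j hjB, heq]
      refine ⟨a, hval, ?_⟩
      intro i j heq
      rcases le_total i j with hle | hle
      · exact key i j hle heq
      · exact (key j i hle heq.symm).symm
    · -- the orbit of x avoids B: use a coordinate of x itself
      push_neg at hc
      refine ⟨x ⟨0, hk⟩, fun s hq => absurd hq (hc s), ?_⟩
      intro i j hij
      have := congrFun hij ⟨0, hk⟩
      rw [cwF_iterate, cwF_iterate] at this
      exact this
  obtain ⟨a, hval, hwd⟩ := hexa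
  refine ⟨B ∪ {z | ∃ i, z = (cwF f k)^[i] x},
    fun z => if z ∈ B then h z else
      if hz : ∃ i, z = (cwF f k)^[i] x then f^[Nat.find hz] a else h z,
    fun z hz => Or.inl hz, Or.inr ⟨0, rfl⟩, ?_, ?_, ?_⟩
  · rintro z (hzB | ⟨i, rfl⟩)
    · exact Or.inl (hB z hzB)
    · exact Or.inr ⟨i + 1, (Function.iterate_succ_apply' (cwF f k) i x).symm⟩
  · intro z hz
    simp only [if_pos hz]
  · intro z hz
    by_cases hzB : z ∈ B
    · have hFz : cwF f k z ∈ B := hB z hzB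
      simp only [if_pos hzB, if_pos hFz]
      exact hh z hzB
    · have hex : ∃ i, z = (cwF f k)^[i] x := by
        rcases hz with hzB' | hex
        · exact absurd hzB' hzB
        · exact hex
      have hzi : z = (cwF f k)^[Nat.find hex] x := Nat.find_spec hex
      have hFz : cwF f k z = (cwF f k)^[Nat.find hex + 1] x :=
        (congrArg (cwF f k) hzi).trans
          (Function.iterate_succ_apply' (cwF f k) _ x).symm
      by_cases hFzB : cwF f k z ∈ B
      · simp only [if_neg hzB, dif_pos hex, if_pos hFzB]
        have hv := hval (Nat.find hex + 1) (hFz ▸ hFzB)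
        rw [← hFz] at hv
        rw [hv, Function.iterate_succ_apply' f]
      · have hexF : ∃ i, cwF f k z = (cwF f k)^[i] x := ⟨_, hFz⟩
        simp only [if_neg hzB, dif_pos hex, if_neg hFzB, dif_pos hexF]
        have hj : cwF f k z = (cwF f k)^[Nat.find hexF] x := Nat.find_spec hexF
        have heq2 : (cwF f k)^[Nat.find hexF] x = (cwF f k)^[Nat.find hex + 1] x := by
          rw [← hj, hFz]
        rw [hwd _ _ heq2, Function.iterate_succ_apply' f]

lemma ext_total [Finite A]
    (hQ : ∀ s : ℕ, ∃ (t : ℕ) (m l : Fin t → ℕ), ∀ a : A,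
      (∃ a₀, a = f^[s] a₀) ↔ ∀ i, f^[m i] a = f^[l i] a)
    {k : ℕ} (hk : 1 ≤ k) :
    ∀ (n : ℕ) (B : Set (Fin k → A)), (∀ x ∈ B, cwF f k x ∈ B) →
      ∀ h : Op A k, (∀ x ∈ B, h (cwF f k x) = f (h x)) → Set.ncard Bᶜ ≤ n →
      ∃ g : Op A k, (∀ x ∈ B, g x = h x) ∧ ∀ x, g (cwF f k x) = f (g x) := by
  intro n
  induction n with
  | zero =>
    intro B hB h hh hcard
    have hBu : B = Set.univ := by
      have h0 : Set.ncard Bᶜ = 0 := Nat.le_zero.mp hcard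
      have : Bᶜ = ∅ := (Set.ncard_eq_zero (Set.toFinite _)).mp h0
      rw [← Set.compl_empty, ← this, compl_compl]
    subst hBu
    exact ⟨h, fun x _ => rfl, fun x => hh x trivial⟩
  | succ n ih =>
    intro B hB h hh hcard
    by_cases hBu : B = Set.univ
    · subst hBu
      exact ⟨h, fun x _ => rfl, fun x => hh x trivial⟩
    · obtain ⟨x, hx⟩ := (Set.ne_univ_iff_exists_notMem B).mp hBu
      obtain ⟨B', h', hsub, hxB', hB', hagree, hh'⟩ :=
        extend_step f hQ hk B hB h hh x hx
      have hlt : Set.ncard B'ᶜ < Set.ncard Bᶜ := by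
        apply Set.ncard_lt_ncard _ (Set.toFinite _)
        constructor
        · exact Set.compl_subset_compl.mpr hsub
        · intro hss
          exact (hss hx) hxB'
      obtain ⟨g, hg1, hg2⟩ := ih B' hB' h' hh' (by omega)
      exact ⟨g, fun z hz => (hg1 z (hsub hz)).trans (hagree z hz), hg2⟩

lemma exists_small_iterate [Finite A] :
    ∃ M : ℕ, 0 < M ∧ ∀ p : ℕ, ∃ q < M, f^[q] = f^[p] := by
  obtain ⟨i, j, hne, hij⟩ := Finite.exists_ne_map_eq_of_infinite (fun n : ℕ => f^[n])
  wlog hlt : i < j generalizing i j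
  · exact this j i hne.symm hij.symm (by omega)
  refine ⟨j, by omega, ?_⟩
  intro p
  induction p using Nat.strong_induction_on with
  | _ p ihp =>
    by_cases hp : p < j
    · exact ⟨p, hp, rfl⟩
    · have hjp : j ≤ p := le_of_not_gt hp
      have heq : f^[p] = f^[(p - j) + i] := by
        have h1 : f^[(p - j) + j] = f^[(p - j) + i] := by
          rw [Function.iterate_add, Function.iterate_add, hij]
        rw [← h1, show (p - j) + j = p from by omega]
      obtain ⟨q, hq, hqe⟩ := ihp ((p - j) + i) (by omega)
      exact ⟨q, hq, hqe.trans heq.symm⟩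

end MonoAux

/-- A finite monounary algebra `(A; f)` (with clone of term
operations `C`) is polymorphism-homogeneous iff for every natural number `k` there is
a quantifier-free primitive positive formula `Ψ_k(x)` over `C°` (i.e. a unary relation
in `⟨C°⟩_∄`) defining exactly the image of `f^[k]`. -/
theorem monounary_polyHom_iff_qf_images (A : Type*) [Fintype A] (f : A → A)
    (C : OpFamily A) (hC : C = CloGen (unOps A f)) :
    AlgPolyHom C ↔
      ∀ k : ℕ, ∃ ρ ∈ qfDef (Ccirc C) 1,
        ∀ a : A, ((fun _ : Fin 1 => a) ∈ ρ ↔ ∃ a₀ : A, a = f^[k] a₀) := by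
  classical
  subst hC
  constructor
  · -- polymorphism-homogeneity implies definability of the images
    intro hPH k
    rcases isEmpty_or_nonempty A with hA | hA
    · refine ⟨Set.univ, ⟨0, fun _ => 0, fun i => i.elim0, fun i => i.elim0,
        fun i => i.elim0, ?_⟩, fun a => (IsEmpty.false a).elim⟩
      ext z
      simp only [Set.mem_univ, Set.mem_setOf_eq, true_iff]
      exact fun i => i.elim0
    · obtain ⟨M, hM0, hMp⟩ := exists_small_iterate f
      set Good : ℕ → ℕ → Prop :=
        fun p q => ∀ b : A, (∃ b₀, b = f^[k] b₀) → f^[p] b = f^[q] b with hGood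
      set E : ℕ → ℕ → Set (Fin 1 → A) := fun p q =>
        if Good p q then {z | f^[p] (z 0) = f^[q] (z 0)} else {z | z 0 = z 0}
        with hEdef
      set τ : Fin (M * M) → Set (Fin 1 → A) := fun i =>
        E ((finProdFinEquiv.symm i).1 : ℕ) ((finProdFinEquiv.symm i).2 : ℕ)
        with hτdef
      have hEcirc : ∀ p q : ℕ, E p q ∈ Ccirc (CloGen (unOps A f)) 1 := by
        intro p q
        by_cases hg : Good p q
        · refine ⟨fun z => f^[p] (z 0), (mem_cloGen_iff f _).mpr ⟨p, 0, rfl⟩,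
            fun z => f^[q] (z 0), (mem_cloGen_iff f _).mpr ⟨q, 0, rfl⟩, ?_⟩
          show (if Good p q then {z : Fin 1 → A | f^[p] (z 0) = f^[q] (z 0)}
            else {z | z 0 = z 0}) = _
          rw [if_pos hg]
        · refine ⟨fun z => z 0, (mem_cloGen_iff f _).mpr ⟨0, 0, rfl⟩,
            fun z => z 0, (mem_cloGen_iff f _).mpr ⟨0, 0, rfl⟩, ?_⟩
          show (if Good p q then {z : Fin 1 → A | f^[p] (z 0) = f^[q] (z 0)}
            else {z | z 0 = z 0}) = _
          rw [if_neg hg]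
      have hEmem2 : ∀ (p q : ℕ) (b : A), (∃ b₀, b = f^[k] b₀) →
          (fun _ : Fin 1 => b) ∈ E p q := by
        intro p q b hb
        show (fun _ : Fin 1 => b) ∈ (if Good p q
          then {z : Fin 1 → A | f^[p] (z 0) = f^[q] (z 0)} else {z | z 0 = z 0})
        split_ifs with hg
        · exact hg b hb
        · exact rfl
      refine ⟨{z : Fin 1 → A | ∀ i : Fin (M * M), (fun _ : Fin 1 => z 0) ∈ τ i},
        ⟨M * M, fun _ => 1, τ, fun _ _ => 0, fun i => hEcirc _ _, rfl⟩, ?_⟩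
      intro a
      constructor
      · -- the hard direction, via polymorphism-homogeneity
        intro hmem
        set s : Finset A := Finset.image f^[k] Finset.univ with hsdef
        have hne : s.Nonempty :=
          ⟨f^[k] (Classical.arbitrary A), Finset.mem_image_of_mem _ (Finset.mem_univ _)⟩
        set r := s.card with hrdef
        have hr1 : 1 ≤ r := Finset.card_pos.mpr hne
        set mfun : Fin r → A := fun i => ((s.equivFin.symm i : s) : A) with hmfun
        have hmem_s : ∀ b : A, (∃ b₀ : A, b = f^[k] b₀) ↔ ∃ i, mfun i = b := by
          intro b
          constructor
          · rintro ⟨b₀, rfl⟩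
            have hb : f^[k] b₀ ∈ s :=
              Finset.mem_image_of_mem _ (Finset.mem_univ _)
            exact ⟨s.equivFin ⟨_, hb⟩, by simp [hmfun]⟩
          · rintro ⟨i, rfl⟩
            have hms : mfun i ∈ s := (s.equivFin.symm i).2
            obtain ⟨b₀, _, hb⟩ := Finset.mem_image.mp hms
            exact ⟨b₀, hb.symm⟩
        set Fv : ℕ → (Fin r → A) := fun n j => f^[n] (mfun j) with hFv
        have hwd : ∀ p q : ℕ, Fv p = Fv q → f^[p] a = f^[q] a := by
          intro p q hpq
          have hgood : Good p q := by
            intro b hb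
            obtain ⟨i, hi⟩ := (hmem_s b).mp hb
            rw [← hi]
            exact congrFun hpq i
          obtain ⟨p', hp', hpe⟩ := hMp p
          obtain ⟨q', hq', hqe⟩ := hMp q
          have hgood' : Good p' q' := by
            intro b hb
            rw [hpe, hqe]
            exact hgood b hb
          have hcon := hmem (finProdFinEquiv (⟨p', hp'⟩, ⟨q', hq'⟩))
          have hτi : τ (finProdFinEquiv (⟨p', hp'⟩, ⟨q', hq'⟩)) = E p' q' := by
            show E _ _ = E p' q'
            rw [Equiv.symm_apply_apply]
          rw [hτi] at hcon
          have hcon' : (fun _ : Fin 1 => a) ∈ (if Good p' q'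
              then {z : Fin 1 → A | f^[p'] (z 0) = f^[q'] (z 0)}
              else {z | z 0 = z 0}) := hcon
          rw [if_pos hgood'] at hcon'
          have hfin : f^[p'] a = f^[q'] a := hcon'
          rw [← hpe, ← hqe]
          exact hfin
        set Bset : Set (Fin r → A) := {z | ∃ n : ℕ, z = Fv n} with hBdef
        have hBcl : ∀ z ∈ Bset, cwF f r z ∈ Bset := by
          rintro z ⟨n, rfl⟩
          refine ⟨n + 1, ?_⟩
          funext j
          simp [hFv, cwF, Function.iterate_succ_apply']
        set h₀ : Op A r := fun z =>
          if hz : ∃ n : ℕ, z = Fv n then f^[Nat.find hz] a else a with hh₀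
        have hFs : ∀ n : ℕ, h₀ (Fv n) = f^[n] a := by
          intro n
          have hex : ∃ m : ℕ, Fv n = Fv m := ⟨n, rfl⟩
          simp only [hh₀, dif_pos hex]
          exact hwd _ _ (Nat.find_spec hex).symm
        have hhom : ∀ z ∈ Bset, ∀ p : ℕ, h₀ (fun j => f^[p] (z j)) = f^[p] (h₀ z) := by
          rintro z ⟨n, rfl⟩ p
          have h1 : (fun j => f^[p] (Fv n j)) = Fv (p + n) := by
            funext j
            simp [hFv, Function.iterate_add_apply]
          rw [h1, hFs, hFs, Function.iterate_add_apply]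
        obtain ⟨g, hg1, hg2⟩ := hPH r hr1 Bset
          ((closedUnder_iff f Bset).mpr hBcl) h₀ ((isHomOn_iff f Bset h₀).mpr hhom)
        have hg2' := (isHomOn_iff f Set.univ g).mp hg2
        have hcj : ∀ j, ∃ c, f^[k] c = mfun j := by
          intro j
          obtain ⟨b₀, hb⟩ := (hmem_s (mfun j)).mpr ⟨j, rfl⟩
          exact ⟨b₀, hb.symm⟩
        choose c hcspec using hcj
        have hFv0 : Fv 0 = fun j => f^[k] (c j) := by
          funext j
          simp [hFv, hcspec]
        have e1 : g (Fv 0) = f^[0] a := by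
          rw [hg1 _ ⟨0, rfl⟩, hFs 0]
        rw [Function.iterate_zero_apply, hFv0] at e1
        rw [hg2' c (Set.mem_univ c) k] at e1
        exact ⟨g c, e1.symm⟩
      · -- easy direction: images satisfy all valid diagonal equations
        rintro ⟨a₀, rfl⟩ i
        exact hEmem2 _ _ _ ⟨a₀, rfl⟩
  · -- definability of the images implies polymorphism-homogeneity
    intro hRHS
    have hQ : ∀ s : ℕ, ∃ (t : ℕ) (m l : Fin t → ℕ), ∀ a : A,
        (∃ a₀, a = f^[s] a₀) ↔ ∀ i, f^[m i] a = f^[l i] a := by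
      intro s
      obtain ⟨ρ, hρ, hchar⟩ := hRHS s
      obtain ⟨t, r, τ, σ, hτ, hρeq⟩ := hρ
      have hex : ∀ i : Fin t, ∃ p q : ℕ, ∀ a : A,
          ((fun j => (fun _ : Fin 1 => a) (σ i j)) ∈ τ i ↔ f^[p] a = f^[q] a) := by
        intro i
        obtain ⟨g1, hg1, g2, hg2, hτi⟩ := hτ i
        obtain ⟨p, u, rfl⟩ := (mem_cloGen_iff f g1).mp hg1
        obtain ⟨q, v, rfl⟩ := (mem_cloGen_iff f g2).mp hg2
        refine ⟨p, q, fun a => ?_⟩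
        rw [hτi]
        exact Iff.rfl
      choose mf lf hml using hex
      refine ⟨t, mf, lf, fun a => ?_⟩
      rw [← hchar a, hρeq]
      simp only [Set.mem_setOf_eq]
      exact forall_congr' fun i => hml i a
    intro k hk B hB h hh
    have hB' := (closedUnder_iff f B).mp hB
    have hh' : ∀ x ∈ B, h (cwF f k x) = f (h x) := by
      intro x hx
      exact (isHomOn_iff f B h).mp hh x hx 1
    obtain ⟨g, hg1, hg2⟩ := ext_total f hQ hk (Set.ncard Bᶜ) B hB' h hh' le_rfl
    refine ⟨g, hg1, (isHomOn_iff f Set.univ g).mpr ?_⟩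
    intro x _ p
    have hgi := hom_iter f (B := (Set.univ : Set (Fin k → A)))
      (fun z _ => Set.mem_univ _) (fun z _ => hg2 z) p x (Set.mem_univ x)
    rwa [cwF_iterate] at hgi
end
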